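/- arXiv:1706.06032 — 7 statements merged into one kernel-verified Lean document; each statement's English description precedes it below -/
import Mathlib

section
/- For m ≥ 1 and every fixed ρ ∈ ℝ, the function z ↦ J_{m,n}(z,ρ) is real-differentiable on ℂ and its Wirtinger derivative in z satisfies ∂/∂z J_{m,n}(z,ρ) = m · J_{m−1,n}(z,ρ) for all z ∈ ℂ. -/
open MeasureTheory ProbabilityTheory Complex Finset

/-- Itô's complex Hermite polynomial `J_{m,n}(z, ρ)`. -/
noncomputable def complexHermite (m n : ℕ) (z : ℂ) (ρ : ℝ) : ℂ :=
  ∑ k ∈ Finset.range (min m n + 1),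
    (-1 : ℂ) ^ k * (Nat.factorial k : ℂ) * (Nat.choose m k : ℂ) * (Nat.choose n k : ℂ) *
      (ρ : ℂ) ^ k * z ^ (m - k) * (starRingEnd ℂ z) ^ (n - k)

/-- Wirtinger derivative `∂f/∂z = (1/2)(∂f/∂x − i ∂f/∂y)`. -/
noncomputable def wirtingerDeriv (f : ℂ → ℂ) (z : ℂ) : ℂ :=
  (fderiv ℝ f z 1 - Complex.I * fderiv ℝ f z Complex.I) / 2

/-- Conjugate Wirtinger derivative `∂f/∂z̄ = (1/2)(∂f/∂x + i ∂f/∂y)`. -/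
noncomputable def wirtingerDerivBar (f : ℂ → ℂ) (z : ℂ) : ℂ :=
  (fderiv ℝ f z 1 + Complex.I * fderiv ℝ f z Complex.I) / 2

/-! `J_{m,n}` is a combination of monomials `z^a z̄^b`, whose real derivative is
`a z^(a-1) z̄^b dz + b z^a z̄^(b-1) dz̄`, and `∂/∂z` reads off the `dz`-coefficient. The identity
`C(m,k) (m-k) = m C(m-1,k)` turns the resulting sum into `m J_{m-1,n}`. -/

open ComplexConjugate

theorem Nat.choose_mul_sub_eq (m k : ℕ) : m.choose k * (m - k) = m * (m - 1).choose k := by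
  cases m with
  | zero => simp
  | succ m => rw [Nat.add_sub_cancel, mul_comm (m + 1), Nat.choose_mul_succ_eq]

theorem wirtingerDeriv_eq_of_hasFDerivAt {f : ℂ → ℂ} {z a b : ℂ}
    (hf : HasFDerivAt f (a • ContinuousLinearMap.id ℝ ℂ + b • (conjCLE : ℂ →L[ℝ] ℂ)) z) :
    wirtingerDeriv f z = a := by
  rw [wirtingerDeriv, hf.fderiv]
  simp only [add_apply, smul_apply, ContinuousLinearMap.id_apply, ContinuousLinearEquiv.coe_coe,
    conjCLE_apply, map_one, conj_I, smul_eq_mul]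
  linear_combination (b - a) / 2 * I_mul_I

theorem hasFDerivAt_const_mul_pow_mul_conj_pow (c : ℂ) (a b : ℕ) (z : ℂ) :
    HasFDerivAt (fun w : ℂ => c * w ^ a * conj w ^ b)
      ((c * a * z ^ (a - 1) * conj z ^ b) • ContinuousLinearMap.id ℝ ℂ +
        (c * b * z ^ a * conj z ^ (b - 1)) • (conjCLE : ℂ →L[ℝ] ℂ)) z := by
  have hpow : HasFDerivAt (fun w : ℂ => w ^ a)
      ((a * z ^ (a - 1)) • ContinuousLinearMap.id ℝ ℂ) z :=
    ((hasDerivAt_pow a z).hasFDerivAt.restrictScalars ℝ).congr_fderiv (by ext; simp [mul_comm])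
  have hconj_pow : HasFDerivAt (fun w : ℂ => conj w ^ b)
      ((b * conj z ^ (b - 1)) • (conjCLE : ℂ →L[ℝ] ℂ)) z :=
    (((hasDerivAt_pow b (conj z)).hasFDerivAt.restrictScalars ℝ).comp z
      conjCLE.hasFDerivAt).congr_fderiv (by ext; simp [mul_comm])
  refine ((hpow.const_mul c).mul hconj_pow).congr_fderiv ?_
  ext v
  simp only [add_apply, smul_apply, ContinuousLinearEquiv.coe_coe, ContinuousAlgEquiv.coeCLE_apply,
    conjCAE_apply, smul_eq_mul, ContinuousLinearMap.id_apply]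
  ring

theorem hasFDerivAt_sum_const_mul_pow_mul_conj_pow {ι : Type*} (s : Finset ι) (c : ι → ℂ)
    (a b : ι → ℕ) (z : ℂ) :
    HasFDerivAt (fun w : ℂ => ∑ i ∈ s, c i * w ^ a i * conj w ^ b i)
      ((∑ i ∈ s, c i * a i * z ^ (a i - 1) * conj z ^ b i) • ContinuousLinearMap.id ℝ ℂ +
        (∑ i ∈ s, c i * b i * z ^ a i * conj z ^ (b i - 1)) • (conjCLE : ℂ →L[ℝ] ℂ)) z := by
  refine (HasFDerivAt.fun_sum fun i _ =>
    hasFDerivAt_const_mul_pow_mul_conj_pow (c i) (a i) (b i) z).congr_fderiv ?_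
  ext v
  simp [Finset.sum_mul, Finset.sum_add_distrib]

theorem complexHermite_eq_sum_range (m n : ℕ) (z : ℂ) (ρ : ℝ) {N : ℕ} (hN : min m n < N) :
    complexHermite m n z ρ = ∑ k ∈ Finset.range N,
      (-1 : ℂ) ^ k * (Nat.factorial k : ℂ) * (Nat.choose m k : ℂ) * (Nat.choose n k : ℂ) *
        (ρ : ℂ) ^ k * z ^ (m - k) * (conj z) ^ (n - k) := by
  refine Finset.sum_subset (Finset.range_subset_range.2 hN) fun k _ hk => ?_
  rcases le_or_gt k m with hkm | hkm
  · simp [Nat.choose_eq_zero_of_lt (show n < k by grind)]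
  · simp [Nat.choose_eq_zero_of_lt hkm]

theorem natCast_mul_complexHermite_sub_one (m n : ℕ) (z : ℂ) (ρ : ℝ) :
    m * complexHermite (m - 1) n z ρ = ∑ k ∈ Finset.range (min m n + 1),
      (-1 : ℂ) ^ k * (Nat.factorial k : ℂ) * (Nat.choose m k : ℂ) * (Nat.choose n k : ℂ) *
        (ρ : ℂ) ^ k * ((m - k : ℕ) : ℂ) * z ^ (m - k - 1) * conj z ^ (n - k) := by
  rw [complexHermite_eq_sum_range (m - 1) n z ρ (N := min m n + 1) (by omega), Finset.mul_sum]
  refine Finset.sum_congr rfl fun k _ => ?_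
  have hchoose : (m.choose k : ℂ) * ((m - k : ℕ) : ℂ) = m * ((m - 1).choose k : ℂ) := by
    exact_mod_cast Nat.choose_mul_sub_eq m k
  rw [Nat.sub_right_comm m 1 k]
  linear_combination (-(-1 : ℂ) ^ k * k.factorial * n.choose k * (ρ : ℂ) ^ k *
    z ^ (m - k - 1) * conj z ^ (n - k)) * hchoose

theorem wirtingerDeriv_complexHermite_general (m n : ℕ) (ρ : ℝ) :
    (∀ z : ℂ, DifferentiableAt ℝ (fun w => complexHermite m n w ρ) z) ∧
    (∀ z : ℂ, wirtingerDeriv (fun w => complexHermite m n w ρ) z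
      = (m : ℂ) * complexHermite (m - 1) n z ρ) := by
  have hJ (z : ℂ) : HasFDerivAt (fun w => complexHermite m n w ρ) _ z :=
    hasFDerivAt_sum_const_mul_pow_mul_conj_pow (Finset.range (min m n + 1))
      (fun k => (-1 : ℂ) ^ k * (Nat.factorial k : ℂ) * (Nat.choose m k : ℂ) *
        (Nat.choose n k : ℂ) * (ρ : ℂ) ^ k) (fun k => m - k) (fun k => n - k) z
  refine ⟨fun z => (hJ z).differentiableAt, fun z => ?_⟩
  rw [wirtingerDeriv_eq_of_hasFDerivAt (hJ z), natCast_mul_complexHermite_sub_one]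

/-- For `m ≥ 1` and fixed `ρ`, `z ↦ J_{m,n}(z,ρ)` is real-differentiable on `ℂ` and
`∂/∂z J_{m,n}(z,ρ) = m · J_{m-1,n}(z,ρ)`. -/
theorem wirtingerDeriv_complexHermite (m n : ℕ) (hm : 1 ≤ m) (ρ : ℝ) :
    (∀ z : ℂ, DifferentiableAt ℝ (fun w => complexHermite m n w ρ) z) ∧
    (∀ z : ℂ, wirtingerDeriv (fun w => complexHermite m n w ρ) z
      = (m : ℂ) * complexHermite (m - 1) n z ρ) :=
  wirtingerDeriv_complexHermite_general m n ρ
end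

section
/- For m ≥ 1 and n ≥ 1 and every fixed z ∈ ℂ, the function ρ ↦ J_{m,n}(z,ρ) is differentiable on ℝ and ∂/∂ρ J_{m,n}(z,ρ) = −m·n · J_{m−1,n−1}(z,ρ) for all ρ ∈ ℝ. -/
open MeasureTheory ProbabilityTheory Complex Finset

open scoped Nat

/-!
Each summand of `J_{m+1,n+1}(z, ρ)` is a monomial in `ρ`. The `k = 0` summand does not depend
on `ρ`, and differentiating the `(k+1)`-st one produces `(k+1)! (k+1) C(m+1,k+1) C(n+1,k+1)`,
which the absorption identity `(k+1) C(m+1,k+1) = (m+1) C(m,k)` turns into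
`(m+1)(n+1) k! C(m,k) C(n,k)`: minus `(m+1)(n+1)` times the `k`-th summand of `J_{m,n}(z, ρ)`.
-/

noncomputable def complexHermiteTerm (m n : ℕ) (z : ℂ) (ρ : ℝ) (k : ℕ) : ℂ :=
  (-1 : ℂ) ^ k * (Nat.factorial k : ℂ) * (Nat.choose m k : ℂ) * (Nat.choose n k : ℂ) *
    (ρ : ℂ) ^ k * z ^ (m - k) * (starRingEnd ℂ z) ^ (n - k)

section

variable (m n : ℕ) (z : ℂ) (ρ : ℝ)

theorem complexHermite_eq_sum_complexHermiteTerm :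
    complexHermite m n z ρ = ∑ k ∈ range (min m n + 1), complexHermiteTerm m n z ρ k :=
  rfl

theorem complexHermiteTerm_zero :
    complexHermiteTerm m n z ρ 0 = z ^ m * (starRingEnd ℂ z) ^ n := by
  simp [complexHermiteTerm]

theorem Nat.factorial_succ_mul_choose_succ_mul_choose_succ (k : ℕ) :
    (k + 1)! * (m + 1).choose (k + 1) * (n + 1).choose (k + 1) * (k + 1) =
      (m + 1) * (n + 1) * (k ! * m.choose k * n.choose k) := by
  calc (k + 1)! * (m + 1).choose (k + 1) * (n + 1).choose (k + 1) * (k + 1)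
      = k ! * ((m + 1).choose (k + 1) * (k + 1)) * ((n + 1).choose (k + 1) * (k + 1)) := by
        rw [Nat.factorial_succ]; ring
    _ = k ! * ((m + 1) * m.choose k) * ((n + 1) * n.choose k) := by
        rw [← Nat.add_one_mul_choose_eq, ← Nat.add_one_mul_choose_eq]
    _ = (m + 1) * (n + 1) * (k ! * m.choose k * n.choose k) := by ring

theorem hasDerivAt_complexHermiteTerm_succ (k : ℕ) :
    HasDerivAt (fun r : ℝ => complexHermiteTerm (m + 1) (n + 1) z r (k + 1))
      (-(((m : ℂ) + 1) * ((n : ℂ) + 1)) * complexHermiteTerm m n z ρ k) ρ := by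
  set c : ℂ := (-1 : ℂ) ^ (k + 1) * ((k + 1)! : ℂ) * ((m + 1).choose (k + 1) : ℂ) *
    ((n + 1).choose (k + 1) : ℂ) * z ^ (m - k) * (starRingEnd ℂ z) ^ (n - k)
  have hpow := ((hasDerivAt_pow (k + 1) (ρ : ℂ)).comp_ofReal).const_mul c
  have hcoeff : (((k + 1)! * (m + 1).choose (k + 1) * (n + 1).choose (k + 1) * (k + 1) : ℕ) : ℂ)
      = (((m + 1) * (n + 1) * (k ! * m.choose k * n.choose k) : ℕ) : ℂ) :=
    congrArg _ (Nat.factorial_succ_mul_choose_succ_mul_choose_succ m n k)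
  push_cast at hcoeff
  have hfun : (fun r : ℝ => complexHermiteTerm (m + 1) (n + 1) z r (k + 1))
      = fun r : ℝ => c * (r : ℂ) ^ (k + 1) := by
    funext r
    simp only [complexHermiteTerm, c, Nat.add_sub_add_right]
    ring
  rw [hfun]
  refine hpow.congr_deriv ?_
  simp only [complexHermiteTerm, c, Nat.add_sub_cancel, Nat.cast_add, Nat.cast_one]
  linear_combination -(-1 : ℂ) ^ k * (ρ : ℂ) ^ k * z ^ (m - k) * (starRingEnd ℂ z) ^ (n - k)
    * hcoeff

theorem hasDerivAt_complexHermite_succ :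
    HasDerivAt (fun r : ℝ => complexHermite (m + 1) (n + 1) z r)
      (-(((m : ℂ) + 1) * ((n : ℂ) + 1)) * complexHermite m n z ρ) ρ := by
  have hsplit : (fun r : ℝ => complexHermite (m + 1) (n + 1) z r) =
      (fun r : ℝ => ∑ k ∈ range (min m n + 1), complexHermiteTerm (m + 1) (n + 1) z r (k + 1))
        + fun _ => z ^ (m + 1) * (starRingEnd ℂ z) ^ (n + 1) := by
    funext r
    rw [Pi.add_apply, complexHermite_eq_sum_complexHermiteTerm, Nat.succ_min_succ,
      sum_range_succ', complexHermiteTerm_zero]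
  rw [hsplit, complexHermite_eq_sum_complexHermiteTerm, mul_sum, ← add_zero (∑ i ∈ _, _)]
  exact (HasDerivAt.fun_sum fun k _ => hasDerivAt_complexHermiteTerm_succ m n z ρ k).add
    (hasDerivAt_const ρ _)

end

/-- For `m, n ≥ 1` and fixed `z`, `ρ ↦ J_{m,n}(z,ρ)` is differentiable on `ℝ` and
`∂/∂ρ J_{m,n}(z,ρ) = −m·n · J_{m-1,n-1}(z,ρ)`. -/
theorem deriv_rho_complexHermite (m n : ℕ) (hm : 1 ≤ m) (hn : 1 ≤ n) (z : ℂ) :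
    (∀ ρ : ℝ, DifferentiableAt ℝ (fun r : ℝ => complexHermite m n z r) ρ) ∧
    (∀ ρ : ℝ, deriv (fun r : ℝ => complexHermite m n z r) ρ
      = -((m : ℂ) * (n : ℂ)) * complexHermite (m - 1) (n - 1) z ρ) := by
  obtain ⟨m, rfl⟩ : ∃ m', m = m' + 1 := ⟨m - 1, by omega⟩
  obtain ⟨n, rfl⟩ : ∃ n', n = n' + 1 := ⟨n - 1, by omega⟩
  refine ⟨fun ρ => (hasDerivAt_complexHermite_succ m n z ρ).differentiableAt, fun ρ => ?_⟩
  rw [(hasDerivAt_complexHermite_succ m n z ρ).deriv, Nat.add_sub_cancel, Nat.add_sub_cancel,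
    Nat.cast_succ, Nat.cast_succ]
end

section
/- For all a, b, z ∈ ℂ and ρ ∈ ℝ, the double series Σ_{(m,n)∈ℕ×ℕ} (a^m b^n / (m! n!)) · J_{m,n}(z,ρ) converges absolutely (is summable over ℕ × ℕ) and its sum equals exp(a·z + b·conj(z) − a·b·ρ). -/
open MeasureTheory ProbabilityTheory Complex Finset

/-!
Write `exp(a z + b z̄ - a b ρ)` as the product of the three exponential series in `a z`, `b z̄`
and `-a b ρ`. This triple series converges absolutely, so it may be regrouped along the map
`(i, j, k) ↦ (i + k, j + k)`; the fibre over `(m, n)` is finite (`k ≤ min m n`), and its sum is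
`aᵐ bⁿ / (m! n!) · J_{m,n}(z, ρ)`, the `k`-th term of `J_{m,n}` coming from `(m - k, n - k, k)`.
-/

section DiagonalShift

variable {α : Type*} [AddCommMonoid α] [TopologicalSpace α]

theorem hasSum_ite_diagonalShift_iff {f : (ℕ × ℕ) × ℕ → α} {s : α} :
    HasSum (fun q : (ℕ × ℕ) × ℕ =>
      if q.2 ≤ q.1.1 ∧ q.2 ≤ q.1.2 then f ((q.1.1 - q.2, q.1.2 - q.2), q.2) else 0) s ↔
      HasSum f s := by
  let e : (ℕ × ℕ) × ℕ → (ℕ × ℕ) × ℕ := fun p => ((p.1.1 + p.2, p.1.2 + p.2), p.2)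
  have he : e.Injective := by
    rintro ⟨⟨i, j⟩, k⟩ ⟨⟨i', j'⟩, k'⟩ h
    simp only [e, Prod.mk.injEq] at h
    obtain ⟨⟨h₁, h₂⟩, rfl⟩ := h
    rw [Nat.add_right_cancel h₁, Nat.add_right_cancel h₂]
  rw [← he.hasSum_iff]
  · congr! 1
    ext ⟨⟨i, j⟩, k⟩
    simp [e]
  · rintro ⟨⟨m, n⟩, k⟩ hq
    rw [if_neg]
    rintro ⟨hm, hn⟩
    exact hq ⟨((m - k, n - k), k), by simp [e, hm, hn]⟩

theorem HasSum.sum_range_min [ContinuousAdd α] [RegularSpace α] {f : (ℕ × ℕ) × ℕ → α} {s : α}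
    (hf : HasSum f s) :
    HasSum (fun p : ℕ × ℕ => ∑ k ∈ range (min p.1 p.2 + 1), f ((p.1 - k, p.2 - k), k)) s := by
  refine (hasSum_ite_diagonalShift_iff.2 hf).prod_fiberwise fun ⟨m, n⟩ => ?_
  convert hasSum_sum_of_ne_finset_zero (L := .unconditional ℕ) (s := range (min m n + 1)) ?_
    using 1
  · refine sum_congr rfl fun k hk => ?_
    rw [mem_range] at hk
    simp only
    rw [if_pos (by omega)]
  · intro k hk
    rw [mem_range] at hk
    simp only
    rw [if_neg (by omega)]

end DiagonalShift

theorem hasSum_mul_mul_of_summable_norm {R ι ι' κ : Type*} [NormedRing R] [CompleteSpace R]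
    {f : ι → R} {g : ι' → R} {h : κ → R} (hf : Summable fun i => ‖f i‖)
    (hg : Summable fun j => ‖g j‖) (hh : Summable fun k => ‖h k‖) :
    HasSum (fun q : (ι × ι') × κ => f q.1.1 * g q.1.2 * h q.2)
      ((∑' i, f i) * (∑' j, g j) * ∑' k, h k) := by
  have hfg : Summable fun p : ι × ι' => ‖f p.1 * g p.2‖ := hf.mul_norm hg
  rw [tsum_mul_tsum_of_summable_norm hf hg, tsum_mul_tsum_of_summable_norm hfg hh]
  exact (summable_mul_of_summable_norm hfg hh).hasSum

open Nat in
theorem pow_mul_pow_div_factorial_mul_hermiteTerm {K : Type*} [Field K] [CharZero K]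
    (x y u v r : K) {m n k : ℕ} (hm : k ≤ m) (hn : k ≤ n) :
    x ^ m * y ^ n / (m ! * n !) *
        ((-1) ^ k * k ! * m.choose k * n.choose k * r ^ k * u ^ (m - k) * v ^ (n - k)) =
      (x * u) ^ (m - k) / (m - k)! * ((y * v) ^ (n - k) / (n - k)!) *
        ((-(x * y * r)) ^ k / k !) := by
  obtain ⟨i, rfl⟩ := Nat.exists_eq_add_of_le' hm
  obtain ⟨j, rfl⟩ := Nat.exists_eq_add_of_le' hn
  simp only [Nat.cast_choose K hm, Nat.cast_choose K hn, Nat.add_sub_cancel]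
  have hi : ((i + k)! : K) ≠ 0 := Nat.cast_ne_zero.2 (Nat.factorial_ne_zero _)
  have hj : ((j + k)! : K) ≠ 0 := Nat.cast_ne_zero.2 (Nat.factorial_ne_zero _)
  field_simp
  ring

theorem mul_complexHermite_eq_sum (a b z : ℂ) (ρ : ℝ) (m n : ℕ) :
    a ^ m * b ^ n / ((m.factorial : ℂ) * (n.factorial : ℂ)) * complexHermite m n z ρ =
      ∑ k ∈ range (min m n + 1),
        (a * z) ^ (m - k) / ((m - k).factorial : ℂ) *
          ((b * starRingEnd ℂ z) ^ (n - k) / ((n - k).factorial : ℂ)) *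
          ((-(a * b * ρ)) ^ k / (k.factorial : ℂ)) := by
  rw [complexHermite, mul_sum]
  refine sum_congr rfl fun k hk => ?_
  rw [mem_range] at hk
  exact pow_mul_pow_div_factorial_mul_hermiteTerm _ _ _ _ _ (by omega) (by omega)

/-- Generating function: `Σ_{m,n} (aᵐbⁿ/(m!n!)) J_{m,n}(z,ρ)` converges absolutely and
equals `exp(a·z + b·conj z − a·b·ρ)`. -/
theorem complexHermite_generating_function (a b z : ℂ) (ρ : ℝ) :
    Summable (fun p : ℕ × ℕ =>
      a ^ p.1 * b ^ p.2 / ((Nat.factorial p.1 : ℂ) * (Nat.factorial p.2 : ℂ)) *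
        complexHermite p.1 p.2 z ρ) ∧
    ∑' p : ℕ × ℕ,
      a ^ p.1 * b ^ p.2 / ((Nat.factorial p.1 : ℂ) * (Nat.factorial p.2 : ℂ)) *
        complexHermite p.1 p.2 z ρ
      = Complex.exp (a * z + b * (starRingEnd ℂ z) - a * b * (ρ : ℂ)) := by
  have hexp (x : ℂ) : HasSum (fun n => x ^ n / (n.factorial : ℂ)) (Complex.exp x) := by
    rw [Complex.exp_eq_exp_ℂ]
    exact NormedSpace.expSeries_div_hasSum_exp x
  have hnorm (x : ℂ) : Summable fun n => ‖x ^ n / (n.factorial : ℂ)‖ :=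
    NormedSpace.norm_expSeries_div_summable x
  have hsum : HasSum (fun p : ℕ × ℕ =>
      a ^ p.1 * b ^ p.2 / ((Nat.factorial p.1 : ℂ) * (Nat.factorial p.2 : ℂ)) *
        complexHermite p.1 p.2 z ρ)
      (Complex.exp (a * z) * Complex.exp (b * starRingEnd ℂ z) * Complex.exp (-(a * b * ρ))) := by
    simp only [mul_complexHermite_eq_sum, ← (hexp _).tsum_eq]
    exact (hasSum_mul_mul_of_summable_norm (hnorm _) (hnorm _) (hnorm _)).sum_range_min
  rw [← Complex.exp_add, ← Complex.exp_add, ← sub_eq_add_neg] at hsum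
  exact ⟨hsum.summable, hsum.tsum_eq⟩
end

section
/- For all m, n ≥ 1, all z ∈ ℂ and ρ ∈ ℝ, the complex Hermite polynomials satisfy the heat-type equation ∂/∂ρ J_{m,n}(z,ρ) = −(∂/∂z)(∂/∂z̄) J_{m,n}(z,ρ), where both sides equal −m·n · J_{m−1,n−1}(z,ρ). -/
open MeasureTheory ProbabilityTheory Complex Finset

/-!
Write `J_{m,n}(z,ρ) = ∑ₖ cₖ(ρ) z^{m-k} z̄^{n-k}`. The binomial identities
`n·C(n-1,k) = C(n,k)(n-k) = C(n,k+1)(k+1)` turn termwise differentiation into the lowering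
relations `∂_z J_{m,n} = m J_{m-1,n}`, `∂_z̄ J_{m,n} = n J_{m,n-1}` and
`∂_ρ J_{m,n} = -mn J_{m-1,n-1}`; composing the first two gives the heat equation.
-/

open ComplexConjugate

lemma Nat.mul_sub_one_choose (n k : ℕ) : n * (n - 1).choose k = n.choose k * (n - k) := by
  cases n with
  | zero => simp
  | succ n => simpa [mul_comm] using Nat.choose_mul_succ_eq n k

/-- Every `ℂ →L[ℝ] ℂ` has this form; as a real derivative, its `a` and `b` are the Wirtinger
derivatives. -/
noncomputable def wirtingerCLM (a b : ℂ) : ℂ →L[ℝ] ℂ :=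
  a • ContinuousLinearMap.id ℝ ℂ + b • conjCLE.toContinuousLinearMap

@[simp]
lemma wirtingerCLM_apply (a b h : ℂ) : wirtingerCLM a b h = a * h + b * conj h := rfl

lemma smul_wirtingerCLM (c a b : ℂ) : c • wirtingerCLM a b = wirtingerCLM (c * a) (c * b) := by
  ext h
  simp only [smul_apply, wirtingerCLM_apply, smul_eq_mul]
  ring

lemma sum_wirtingerCLM {ι : Type*} (s : Finset ι) (a b : ι → ℂ) :
    ∑ i ∈ s, wirtingerCLM (a i) (b i) = wirtingerCLM (∑ i ∈ s, a i) (∑ i ∈ s, b i) := by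
  ext h
  simp [sum_mul, sum_add_distrib]

lemma HasFDerivAt.wirtingerDeriv_eq {f : ℂ → ℂ} {a b z : ℂ}
    (hf : HasFDerivAt f (wirtingerCLM a b) z) : wirtingerDeriv f z = a := by
  rw [wirtingerDeriv, hf.fderiv]
  simp only [wirtingerCLM_apply, map_one, conj_I]
  ring_nf
  rw [I_sq]
  ring

lemma HasFDerivAt.wirtingerDerivBar_eq {f : ℂ → ℂ} {a b z : ℂ}
    (hf : HasFDerivAt f (wirtingerCLM a b) z) : wirtingerDerivBar f z = b := by
  rw [wirtingerDerivBar, hf.fderiv]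
  simp only [wirtingerCLM_apply, map_one, conj_I]
  ring_nf
  rw [I_sq]
  ring

lemma hasFDerivAt_pow_mul_conj_pow (p q : ℕ) (z : ℂ) :
    HasFDerivAt (fun v : ℂ => v ^ p * conj v ^ q)
      (wirtingerCLM (p * z ^ (p - 1) * conj z ^ q) (q * z ^ p * conj z ^ (q - 1))) z := by
  have hpow := (hasDerivAt_pow p z).hasFDerivAt.restrictScalars ℝ
  have hconj := ((hasDerivAt_pow q (conj z)).hasFDerivAt.restrictScalars ℝ).comp z
    conjCLE.toContinuousLinearMap.hasFDerivAt
  refine (hpow.mul' hconj).congr_fderiv ?_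
  ext h
  simp only [Function.comp_apply, MulOpposite.op_pow, add_apply, smul_apply,
    ContinuousLinearMap.comp_apply, ContinuousLinearEquiv.coe_coe, ContinuousAlgEquiv.coeCLE_apply,
    conjCAE_apply, ContinuousLinearMap.coe_restrictScalars',
    ContinuousLinearMap.toSpanSingleton_apply, smul_eq_mul, MulOpposite.smul_eq_mul_unop,
    MulOpposite.unop_pow, MulOpposite.unop_op, wirtingerCLM_apply]
  ring

noncomputable def complexHermiteCoeff (m n k : ℕ) (ρ : ℝ) : ℂ :=
  (-1) ^ k * (k.factorial : ℂ) * (m.choose k : ℂ) * (n.choose k : ℂ) * (ρ : ℂ) ^ k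

/-- The terms with `k > min m n` vanish. -/
lemma complexHermite_eq_sum {m n N : ℕ} (hN : min m n < N) (z : ℂ) (ρ : ℝ) :
    complexHermite m n z ρ =
      ∑ k ∈ range N, complexHermiteCoeff m n k ρ * (z ^ (m - k) * conj z ^ (n - k)) := by
  have hsub : range (min m n + 1) ⊆ range N := range_subset_range.2 (by omega)
  rw [complexHermite, ← sum_subset hsub]
  · refine sum_congr rfl fun k _ => ?_
    simp only [complexHermiteCoeff]
    ring
  · intro k _ hk
    have : m < k ∨ n < k := by simp only [mem_range] at hk; omega
    rcases this with h | h <;> simp [complexHermiteCoeff, Nat.choose_eq_zero_of_lt h]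

lemma complexHermiteCoeff_mul_sub_left (m n k : ℕ) (ρ : ℝ) :
    complexHermiteCoeff m n k ρ * (m - k : ℕ) = m * complexHermiteCoeff (m - 1) n k ρ := by
  have h : (m : ℂ) * ((m - 1).choose k : ℂ) = (m.choose k : ℂ) * ((m - k : ℕ) : ℂ) := by
    exact_mod_cast Nat.mul_sub_one_choose m k
  simp only [complexHermiteCoeff]
  linear_combination (-(-1) ^ k * (k.factorial : ℂ) * (n.choose k : ℂ) * (ρ : ℂ) ^ k) * h

lemma complexHermiteCoeff_mul_sub_right (m n k : ℕ) (ρ : ℝ) :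
    complexHermiteCoeff m n k ρ * (n - k : ℕ) = n * complexHermiteCoeff m (n - 1) k ρ := by
  have h : (n : ℂ) * ((n - 1).choose k : ℂ) = (n.choose k : ℂ) * ((n - k : ℕ) : ℂ) := by
    exact_mod_cast Nat.mul_sub_one_choose n k
  simp only [complexHermiteCoeff]
  linear_combination (-(-1) ^ k * (k.factorial : ℂ) * (m.choose k : ℂ) * (ρ : ℂ) ^ k) * h

lemma hasDerivAt_complexHermiteCoeff_succ (m n k : ℕ) (ρ : ℝ) :
    HasDerivAt (fun r : ℝ => complexHermiteCoeff m n (k + 1) r)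
      (-(m * n) * complexHermiteCoeff (m - 1) (n - 1) k ρ) ρ := by
  have hchoose (p : ℕ) : (p.choose (k + 1) : ℂ) * (k + 1) = p * ((p - 1).choose k : ℂ) := by
    exact_mod_cast (Nat.choose_succ_right_eq p k).trans (Nat.mul_sub_one_choose p k).symm
  refine (HasDerivAt.const_mul
    ((-1) ^ (k + 1) * ((k + 1).factorial : ℂ) * (m.choose (k + 1) : ℂ) * (n.choose (k + 1) : ℂ))
    (hasDerivAt_pow (k + 1) (ρ : ℂ)).comp_ofReal).congr_deriv ?_
  simp only [complexHermiteCoeff, Nat.factorial_succ, Nat.add_sub_cancel]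
  push_cast
  linear_combination (-(-1) ^ k * (k.factorial : ℂ) * (ρ : ℂ) ^ k) *
    ((n.choose (k + 1) : ℂ) * (k + 1) * hchoose m + m * ((m - 1).choose k : ℂ) * hchoose n)

lemma hasDerivAt_complexHermite_param (m n : ℕ) (z : ℂ) (ρ : ℝ) :
    HasDerivAt (fun r : ℝ => complexHermite m n z r)
      (-(m * n) * complexHermite (m - 1) (n - 1) z ρ) ρ := by
  set N := min m n + 1
  have hJ : (fun r : ℝ => complexHermite m n z r) = fun r =>
      ∑ k ∈ range N, complexHermiteCoeff m n (k + 1) r * (z ^ (m - 1 - k) * conj z ^ (n - 1 - k))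
        + complexHermiteCoeff m n 0 r * (z ^ m * conj z ^ n) := by
    funext r
    rw [complexHermite_eq_sum (N := N + 1) (by omega), sum_range_succ']
    simp only [Nat.sub_zero, Nat.sub_add_eq, Nat.sub_right_comm _ 1]
  have hconst : HasDerivAt (fun r : ℝ => complexHermiteCoeff m n 0 r) 0 ρ := by
    simpa [complexHermiteCoeff] using hasDerivAt_const ρ (1 : ℂ)
  rw [hJ, complexHermite_eq_sum (N := N) (by omega), mul_sum]
  refine ((HasDerivAt.fun_sum fun k _ =>
    (hasDerivAt_complexHermiteCoeff_succ m n k ρ).mul_const _).add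
      (hconst.mul_const _)).congr_deriv ?_
  simp only [zero_mul, add_zero, mul_assoc]

lemma hasFDerivAt_complexHermite (m n : ℕ) (ρ : ℝ) (z : ℂ) :
    HasFDerivAt (fun v => complexHermite m n v ρ)
      (wirtingerCLM (m * complexHermite (m - 1) n z ρ) (n * complexHermite m (n - 1) z ρ)) z := by
  set N := m + n + 1
  have hJ : (fun v => complexHermite m n v ρ) = fun v =>
      ∑ k ∈ range N, complexHermiteCoeff m n k ρ * (v ^ (m - k) * conj v ^ (n - k)) :=
    funext fun v => complexHermite_eq_sum (by omega) v ρ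
  rw [hJ]
  refine (HasFDerivAt.fun_sum fun k _ =>
    (hasFDerivAt_pow_mul_conj_pow (m - k) (n - k) z).const_mul
      (complexHermiteCoeff m n k ρ)).congr_fderiv ?_
  rw [sum_congr rfl fun k _ => smul_wirtingerCLM _ _ _, sum_wirtingerCLM,
    complexHermite_eq_sum (N := N) (by omega), complexHermite_eq_sum (N := N) (by omega),
    mul_sum, mul_sum]
  congr 1 <;> refine sum_congr rfl fun k _ => ?_
  · rw [Nat.sub_right_comm m 1, ← mul_assoc (m : ℂ), ← complexHermiteCoeff_mul_sub_left]
    ring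
  · rw [Nat.sub_right_comm n 1, ← mul_assoc (n : ℂ), ← complexHermiteCoeff_mul_sub_right]
    ring

theorem complexHermite_heat_equation_general (m n : ℕ) (z : ℂ) (ρ : ℝ) :
    deriv (fun r : ℝ => complexHermite m n z r) ρ
      = -(wirtingerDeriv (fun w => wirtingerDerivBar (fun v => complexHermite m n v ρ) w) z) ∧
    deriv (fun r : ℝ => complexHermite m n z r) ρ
      = -((m : ℂ) * (n : ℂ)) * complexHermite (m - 1) (n - 1) z ρ := by
  have hρ := (hasDerivAt_complexHermite_param m n z ρ).deriv
  refine ⟨?_, hρ⟩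
  have hbar : (fun w => wirtingerDerivBar (fun v => complexHermite m n v ρ) w)
      = fun w => n * complexHermite m (n - 1) w ρ :=
    funext fun w => (hasFDerivAt_complexHermite m n ρ w).wirtingerDerivBar_eq
  have hz := (hasFDerivAt_complexHermite m (n - 1) ρ z).const_mul (n : ℂ)
  rw [smul_wirtingerCLM] at hz
  rw [hρ, hbar, hz.wirtingerDeriv_eq]
  ring

/-- Heat-type equation: for `m, n ≥ 1`,
`∂/∂ρ J_{m,n} = −(∂/∂z)(∂/∂z̄) J_{m,n}`, both sides being `−m·n·J_{m-1,n-1}`. -/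
theorem complexHermite_heat_equation (m n : ℕ) (hm : 1 ≤ m) (hn : 1 ≤ n) (z : ℂ) (ρ : ℝ) :
    deriv (fun r : ℝ => complexHermite m n z r) ρ
      = -(wirtingerDeriv (fun w => wirtingerDerivBar (fun v => complexHermite m n v ρ) w) z) ∧
    deriv (fun r : ℝ => complexHermite m n z r) ρ
      = -((m : ℂ) * (n : ℂ)) * complexHermite (m - 1) (n - 1) z ρ :=
  complexHermite_heat_equation_general m n z ρ
end

section
/- Integration by parts for complex Gaussian variables: let Z be a complex Gaussian random variable with parameter ρ > 0, and let f : ℂ → ℂ be continuously differentiable (as a map ℝ² → ℝ²) with f and its derivative bounded. Then E[conj(Z) · f(Z)] = ρ · E[(∂f/∂z)(Z)]. -/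
/-!
A centred real Gaussian density `p` of variance `v` satisfies `p' = -(x / v) p`, so integrating
`p g'` by parts over `ℝ` gives Stein's identity `E[X g(X)] = v E[g'(X)]`. Writing `Z = X + iY`
with `X, Y` independent of variance `ρ / 2`, Fubini lets one apply it in each variable:
`E[X f(Z)] = (ρ / 2) E[∂f/∂x (Z)]` and `E[Y f(Z)] = (ρ / 2) E[∂f/∂y (Z)]`. Since `conj Z = X - iY`,
the first minus `i` times the second is `ρ E[(∂f/∂z)(Z)]`.
-/

open MeasureTheory ProbabilityTheory Complex Finset

/-- Law of a complex Gaussian variable with parameter `ρ`: the law of `Z = X + iY` where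
`X, Y` are independent real centered Gaussian variables of mean `0` and variance `ρ/2`. -/
noncomputable def complexGaussian (ρ : ℝ) : Measure ℂ :=
  ((gaussianReal 0 (ρ/2).toNNReal).prod (gaussianReal 0 (ρ/2).toNNReal)).map
    (fun p => (p.1 : ℂ) + (p.2 : ℂ) * Complex.I)

open scoped NNReal ComplexConjugate

namespace ProbabilityTheory

lemma hasDerivAt_gaussianPDFReal (μ : ℝ) (v : ℝ≥0) (x : ℝ) :
    HasDerivAt (gaussianPDFReal μ v) (-((x - μ) / v) * gaussianPDFReal μ v x) x := by
  have hexp : HasDerivAt (fun y ↦ -(y - μ) ^ 2 / (2 * v)) (-((x - μ) / v)) x :=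
    ((((hasDerivAt_id' x).sub_const μ).pow 2).neg.div_const (2 * (v : ℝ))).congr_deriv (by ring)
  exact (hexp.exp.const_mul (√(2 * Real.pi * v))⁻¹).congr_deriv
    (by rw [gaussianPDFReal]; ring)

lemma integrable_gaussianReal_iff {E : Type*} [NormedAddCommGroup E] [NormedSpace ℝ E]
    {μ : ℝ} {v : ℝ≥0} (hv : v ≠ 0) {f : ℝ → E} :
    Integrable f (gaussianReal μ v) ↔ Integrable (fun x ↦ gaussianPDFReal μ v x • f x) := by
  rw [gaussianReal_of_var_ne_zero _ hv, integrable_withDensity_iff_integrable_smul'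
    (measurable_gaussianPDF μ v) (ae_of_all _ fun _ ↦ gaussianPDF_lt_top)]
  simp only [toReal_gaussianPDF]

theorem integral_sub_smul_gaussianReal {E : Type*} [NormedAddCommGroup E] [NormedSpace ℝ E]
    [CompleteSpace E] {μ : ℝ} {v : ℝ≥0} {g g' : ℝ → E} {C C' : ℝ}
    (hg : ∀ x, HasDerivAt g (g' x) x) (hgC : ∀ x, ‖g x‖ ≤ C) (hg'C : ∀ x, ‖g' x‖ ≤ C') :
    ∫ x, (x - μ) • g x ∂gaussianReal μ v = (v : ℝ) • ∫ x, g' x ∂gaussianReal μ v := by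
  rcases eq_or_ne v 0 with rfl | hv
  · simp [gaussianReal_zero_var, integral_dirac]
  have hg_meas : AEStronglyMeasurable g (gaussianReal μ v) :=
    (continuous_iff_continuousAt.2 fun x ↦ (hg x).continuousAt).aestronglyMeasurable
  have hg'_meas : AEStronglyMeasurable g' (gaussianReal μ v) := by
    rw [show g' = deriv g from funext fun x ↦ (hg x).deriv.symm]
    exact aestronglyMeasurable_deriv g _
  have hX : Integrable (fun x ↦ x - μ) (gaussianReal μ v) :=
    (memLp_one_iff_integrable.1 (memLp_id_gaussianReal 1)).sub (integrable_const μ)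
  have hXg : Integrable (fun x ↦ (x - μ) • g x) (gaussianReal μ v) :=
    hX.smul_bdd C hg_meas (ae_of_all _ hgC)
  have hg' : Integrable g' (gaussianReal μ v) := .of_bound hg'_meas C' (ae_of_all _ hg'C)
  have hg_int : Integrable g (gaussianReal μ v) := .of_bound hg_meas C (ae_of_all _ hgC)
  rw [integrable_gaussianReal_iff hv] at hXg hg' hg_int
  have hp'g : ∀ x, (-((x - μ) / v) * gaussianPDFReal μ v x) • g x
      = -((v : ℝ)⁻¹ • gaussianPDFReal μ v x • (x - μ) • g x) := fun x ↦ by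
    rw [smul_smul, smul_smul, ← neg_smul]
    congr 1
    ring
  have hparts := integral_bilinear_hasDerivAt_right_eq_neg_left_of_integrable
    (L := ContinuousLinearMap.lsmul ℝ ℝ) (fun x _ ↦ hasDerivAt_gaussianPDFReal μ v x)
    (fun x _ ↦ hg x) hg'
    (by simp_rw [ContinuousLinearMap.lsmul_apply, hp'g]; exact (hXg.smul _).neg) hg_int
  simp_rw [ContinuousLinearMap.lsmul_apply, hp'g] at hparts
  rw [integral_gaussianReal_eq_integral_smul hv, integral_gaussianReal_eq_integral_smul hv, hparts,
    integral_neg, integral_smul, neg_neg, smul_inv_smul₀ (NNReal.coe_ne_zero.2 hv)]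

theorem integral_smul_comp_add_smul_gaussianReal {E F : Type*} [NormedAddCommGroup E]
    [NormedSpace ℝ E] [CompleteSpace E] [NormedAddCommGroup F] [NormedSpace ℝ F] {f : F → E}
    {C C' : ℝ} (hf : Differentiable ℝ f) (hfC : ∀ z, ‖f z‖ ≤ C)
    (hf'C : ∀ z, ‖fderiv ℝ f z‖ ≤ C') (v : ℝ≥0) (a w : F) :
    ∫ t, t • f (a + t • w) ∂gaussianReal 0 v
      = (v : ℝ) • ∫ t, fderiv ℝ f (a + t • w) w ∂gaussianReal 0 v := by
  have hline : ∀ t : ℝ, HasDerivAt (fun t ↦ f (a + t • w)) (fderiv ℝ f (a + t • w) w) t :=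
    fun t ↦ by
      have hl : HasDerivAt (fun t : ℝ ↦ a + t • w) w t := by
        simpa using ((hasDerivAt_id t).smul_const w).const_add a
      exact (hf _).hasFDerivAt.comp_hasDerivAt t hl
  simpa using integral_sub_smul_gaussianReal (μ := 0) (v := v) hline (fun _ ↦ hfC _)
    (fun t ↦ ((fderiv ℝ f _).le_opNorm w).trans
      (mul_le_mul_of_nonneg_right (hf'C _) (norm_nonneg w)))

end ProbabilityTheory

namespace complexGaussian

variable {E : Type*} [NormedAddCommGroup E] {ρ C C' : ℝ}

lemma measurableEmbedding_ofReal_add_ofReal_mul_I :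
    MeasurableEmbedding (fun p : ℝ × ℝ ↦ (p.1 : ℂ) + p.2 * I) := by
  convert measurableEquivRealProd.symm.measurableEmbedding
  apply Complex.ext <;> simp

lemma integral_eq_integral_prod [NormedSpace ℝ E] (ρ : ℝ) (h : ℂ → E) :
    ∫ z, h z ∂complexGaussian ρ
      = ∫ p, h (p.1 + p.2 * I)
          ∂(gaussianReal 0 (ρ / 2).toNNReal).prod (gaussianReal 0 (ρ / 2).toNNReal) :=
  measurableEmbedding_ofReal_add_ofReal_mul_I.integral_map h

lemma integrable_iff_integrable_prod {h : ℂ → E} :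
    Integrable h (complexGaussian ρ) ↔ Integrable (fun p ↦ h (p.1 + p.2 * I))
      ((gaussianReal 0 (ρ / 2).toNNReal).prod (gaussianReal 0 (ρ / 2).toNNReal)) :=
  measurableEmbedding_ofReal_add_ofReal_mul_I.integrable_map_iff

instance : IsProbabilityMeasure (complexGaussian ρ) :=
  Measure.isProbabilityMeasure_map
    measurableEmbedding_ofReal_add_ofReal_mul_I.measurable.aemeasurable

lemma integrable_re : Integrable (fun z : ℂ ↦ z.re) (complexGaussian ρ) := by
  have h := memLp_one_iff_integrable.1 (memLp_id_gaussianReal (μ := 0) (v := (ρ / 2).toNNReal) 1)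
  exact integrable_iff_integrable_prod.2 (by simpa using h.comp_fst _)

lemma integrable_im : Integrable (fun z : ℂ ↦ z.im) (complexGaussian ρ) := by
  have h := memLp_one_iff_integrable.1 (memLp_id_gaussianReal (μ := 0) (v := (ρ / 2).toNNReal) 1)
  exact integrable_iff_integrable_prod.2 (by simpa using h.comp_snd _)

variable [NormedSpace ℝ E] {f : ℂ → E}

lemma integrable_re_smul (hf : Continuous f) (hfC : ∀ z, ‖f z‖ ≤ C) :
    Integrable (fun z ↦ z.re • f z) (complexGaussian ρ) :=
  integrable_re.smul_bdd C hf.aestronglyMeasurable (ae_of_all _ hfC)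

lemma integrable_im_smul (hf : Continuous f) (hfC : ∀ z, ‖f z‖ ≤ C) :
    Integrable (fun z ↦ z.im • f z) (complexGaussian ρ) :=
  integrable_im.smul_bdd C hf.aestronglyMeasurable (ae_of_all _ hfC)

lemma integrable_fderiv_apply (hf : ContDiff ℝ 1 f) (hf'C : ∀ z, ‖fderiv ℝ f z‖ ≤ C') (w : ℂ) :
    Integrable (fun z ↦ fderiv ℝ f z w) (complexGaussian ρ) :=
  .of_bound ((hf.continuous_fderiv one_ne_zero).clm_apply continuous_const).aestronglyMeasurable
    (C' * ‖w‖) (ae_of_all _ fun z ↦ ((fderiv ℝ f z).le_opNorm w).trans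
      (mul_le_mul_of_nonneg_right (hf'C z) (norm_nonneg w)))

variable [CompleteSpace E]

theorem integral_re_smul (hρ : 0 ≤ ρ) (hf : ContDiff ℝ 1 f) (hfC : ∀ z, ‖f z‖ ≤ C)
    (hf'C : ∀ z, ‖fderiv ℝ f z‖ ≤ C') :
    ∫ z, z.re • f z ∂complexGaussian ρ = (ρ / 2) • ∫ z, fderiv ℝ f z 1 ∂complexGaussian ρ := by
  have h1 := integrable_iff_integrable_prod.1 (integrable_re_smul (ρ := ρ) hf.continuous hfC)
  have h2 := integrable_iff_integrable_prod.1 (integrable_fderiv_apply (ρ := ρ) hf hf'C 1)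
  rw [integral_eq_integral_prod, integral_eq_integral_prod]
  simp only [add_re, ofReal_re, re_ofReal_mul, I_re, mul_zero, add_zero] at h1 ⊢
  rw [integral_prod_symm _ h1, integral_prod_symm _ h2, ← integral_smul]
  refine integral_congr_ae (ae_of_all _ fun y ↦ ?_)
  have hline := integral_smul_comp_add_smul_gaussianReal (hf.differentiable one_ne_zero) hfC hf'C
    (ρ / 2).toNNReal (y * I) 1
  rw [Real.coe_toNNReal _ (by positivity)] at hline
  simpa [add_comm] using hline

theorem integral_im_smul (hρ : 0 ≤ ρ) (hf : ContDiff ℝ 1 f) (hfC : ∀ z, ‖f z‖ ≤ C)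
    (hf'C : ∀ z, ‖fderiv ℝ f z‖ ≤ C') :
    ∫ z, z.im • f z ∂complexGaussian ρ = (ρ / 2) • ∫ z, fderiv ℝ f z I ∂complexGaussian ρ := by
  have h1 := integrable_iff_integrable_prod.1 (integrable_im_smul (ρ := ρ) hf.continuous hfC)
  have h2 := integrable_iff_integrable_prod.1 (integrable_fderiv_apply (ρ := ρ) hf hf'C I)
  rw [integral_eq_integral_prod, integral_eq_integral_prod]
  simp only [add_im, ofReal_im, im_ofReal_mul, I_im, mul_one, zero_add] at h1 ⊢
  rw [integral_prod _ h1, integral_prod _ h2, ← integral_smul]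
  refine integral_congr_ae (ae_of_all _ fun x ↦ ?_)
  have hline := integral_smul_comp_add_smul_gaussianReal (hf.differentiable one_ne_zero) hfC hf'C
    (ρ / 2).toNNReal x I
  rw [Real.coe_toNNReal _ (by positivity)] at hline
  simpa using hline

theorem integral_conj_mul {f : ℂ → ℂ} (hρ : 0 ≤ ρ) (hf : ContDiff ℝ 1 f) (hfC : ∀ z, ‖f z‖ ≤ C)
    (hf'C : ∀ z, ‖fderiv ℝ f z‖ ≤ C') :
    ∫ z, conj z * f z ∂complexGaussian ρ = ρ * ∫ z, wirtingerDeriv f z ∂complexGaussian ρ := by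
  have hconj : ∀ z, conj z * f z = z.re • f z - I * (z.im • f z) := fun z ↦ by
    rw [show conj z = z.re - z.im * I by apply Complex.ext <;> simp, real_smul, real_smul]
    ring
  have hwirt : ∫ z, wirtingerDeriv f z ∂complexGaussian ρ
      = ((∫ z, fderiv ℝ f z 1 ∂complexGaussian ρ)
        - I * ∫ z, fderiv ℝ f z I ∂complexGaussian ρ) / 2 := by
    rw [← integral_const_mul, ← integral_sub (integrable_fderiv_apply hf hf'C 1)
      ((integrable_fderiv_apply hf hf'C I).const_mul I), ← integral_div]
    rfl
  calc ∫ z, conj z * f z ∂complexGaussian ρ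
      = (∫ z, z.re • f z ∂complexGaussian ρ) - I * ∫ z, z.im • f z ∂complexGaussian ρ := by
        simp_rw [hconj]
        rw [integral_sub (integrable_re_smul hf.continuous hfC)
          ((integrable_im_smul hf.continuous hfC).const_mul I), integral_const_mul]
    _ = (ρ / 2 : ℝ) • ((∫ z, fderiv ℝ f z 1 ∂complexGaussian ρ)
          - I * ∫ z, fderiv ℝ f z I ∂complexGaussian ρ) := by
        rw [integral_re_smul hρ hf hfC hf'C, integral_im_smul hρ hf hfC hf'C, real_smul,
          real_smul, real_smul]
        ring
    _ = ρ * ∫ z, wirtingerDeriv f z ∂complexGaussian ρ := by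
        rw [hwirt, real_smul]
        push_cast
        ring

end complexGaussian

theorem continuous_wirtingerDeriv {f : ℂ → ℂ} (hf : ContDiff ℝ 1 f) :
    Continuous (wirtingerDeriv f) := by
  have hD := hf.continuous_fderiv one_ne_zero
  exact ((hD.clm_apply continuous_const).sub
    (continuous_const.mul (hD.clm_apply continuous_const))).div_const 2

theorem complex_gaussian_integration_by_parts_general
    {Ω : Type*} [MeasurableSpace Ω] (P : Measure Ω)
    (Z : Ω → ℂ) (hZmeas : Measurable Z) (ρ : ℝ) (hρ : 0 < ρ)
    (hZ : Measure.map Z P = complexGaussian ρ)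
    (f : ℂ → ℂ) (hf : ContDiff ℝ 1 f) (C : ℝ)
    (hfb : ∀ z, ‖f z‖ ≤ C) (hfd : ∀ z, ‖fderiv ℝ f z‖ ≤ C) :
    ∫ ω, (starRingEnd ℂ) (Z ω) * f (Z ω) ∂P
      = (ρ : ℂ) * ∫ ω, wirtingerDeriv f (Z ω) ∂P := by
  rw [← integral_map (f := fun z ↦ conj z * f z) hZmeas.aemeasurable
    (continuous_conj.mul hf.continuous).aestronglyMeasurable,
    ← integral_map hZmeas.aemeasurable (continuous_wirtingerDeriv hf).aestronglyMeasurable, hZ]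
  exact complexGaussian.integral_conj_mul hρ.le hf hfb hfd

/-- Integration by parts for a complex Gaussian variable `Z` with parameter `ρ > 0`:
`E[conj(Z)·f(Z)] = ρ·E[(∂f/∂z)(Z)]` for `f : ℂ → ℂ` continuously differentiable with
`f` and its derivative bounded. -/
theorem complex_gaussian_integration_by_parts
    {Ω : Type*} [MeasurableSpace Ω] (P : Measure Ω) [IsProbabilityMeasure P]
    (Z : Ω → ℂ) (hZmeas : Measurable Z) (ρ : ℝ) (hρ : 0 < ρ)
    (hZ : Measure.map Z P = complexGaussian ρ)
    (f : ℂ → ℂ) (hf : ContDiff ℝ 1 f) (C : ℝ)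
    (hfb : ∀ z, ‖f z‖ ≤ C) (hfd : ∀ z, ‖fderiv ℝ f z‖ ≤ C) :
    ∫ ω, (starRingEnd ℂ) (Z ω) * f (Z ω) ∂P
      = (ρ : ℂ) * ∫ ω, wirtingerDeriv f (Z ω) ∂P :=
  complex_gaussian_integration_by_parts_general P Z hZmeas ρ hρ hZ f hf C hfb hfd
end

section
/- Product formula for complex Hermite polynomials: for all m, n, p, q ∈ ℕ, all z ∈ ℂ and ρ ∈ ℝ, J_{m,n}(z,ρ) · J_{p,q}(z,ρ) = Σ_{i=0}^{min(m,q)} Σ_{j=0}^{min(n,p)} i! · j! · (m choose i)(q choose i)(n choose j)(p choose j) · ρ^{i+j} · J_{m+p−i−j, n+q−i−j}(z,ρ). -/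
open MeasureTheory ProbabilityTheory Complex Finset

noncomputable def J (m n : ℕ) (x y r : ℂ) : ℂ :=
  ∑ k ∈ Finset.range (min m n + 1),
    (-1 : ℂ) ^ k * (Nat.factorial k : ℂ) * (Nat.choose m k : ℂ) * (Nat.choose n k : ℂ) *
      r ^ k * x ^ (m - k) * y ^ (n - k)

lemma J_eq_sum (m n N : ℕ) (h : min m n < N) (x y r : ℂ) :
    J m n x y r = ∑ k ∈ Finset.range N,
      (-1 : ℂ) ^ k * (Nat.factorial k : ℂ) * (Nat.choose m k : ℂ) * (Nat.choose n k : ℂ) *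
        r ^ k * x ^ (m - k) * y ^ (n - k) := by
  apply Finset.sum_subset
  · intro k hk; simp only [mem_range] at *; omega
  · intro k hk hk2
    simp only [mem_range, not_lt] at *
    rcases Nat.lt_or_ge m n with hc | hc
    · rw [Nat.choose_eq_zero_of_lt (by omega : m < k)]; ring
    · rw [Nat.choose_eq_zero_of_lt (by omega : n < k)]; ring

lemma J_swap (m n : ℕ) (x y r : ℂ) : J m n x y r = J n m y x r := by
  unfold J
  rw [min_comm]
  exact Finset.sum_congr rfl fun k _ => by ring

lemma J_zero_right (m : ℕ) (x y r : ℂ) : J m 0 x y r = x ^ m := by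
  simp [J]

lemma J_zero_left (n : ℕ) (x y r : ℂ) : J 0 n x y r = y ^ n := by
  rw [J_swap, J_zero_right]

lemma hfac (n : ℕ) : ∀ k : ℕ, (((k+1).factorial : ℕ) : ℂ) * (((n+1).choose (k+1) : ℕ) : ℂ)
      = ((n:ℂ)+1) * ((k.factorial : ℂ) * ((n.choose k : ℕ) : ℂ)) := by
  intro k
  have h := Nat.add_one_mul_choose_eq n k
  have key : (k+1).factorial * ((n+1).choose (k+1)) = (n+1) * (k.factorial * n.choose k) := by
    rw [Nat.factorial_succ]
    calc (k+1) * k.factorial * ((n+1).choose (k+1))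
        = k.factorial * ((n+1).choose (k+1) * (k+1)) := by ring
      _ = k.factorial * ((n+1) * n.choose k) := by rw [← h]
      _ = (n+1) * (k.factorial * n.choose k) := by ring
  exact_mod_cast key

lemma rec_left_succ (m n : ℕ) (x y r : ℂ) :
    J (m+1) (n+1) x y r = x * J m (n+1) x y r - ((n:ℂ)+1) * r * J m n x y r := by
  rw [J_eq_sum (m+1) (n+1) (min m n + 1 + 1) (by omega) x y r,
      Finset.sum_range_succ' _ (min m n + 1),
      J_eq_sum m (n+1) (min m n + 1 + 1) (by omega) x y r,
      Finset.sum_range_succ' _ (min m n + 1),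
      J, mul_add, Finset.mul_sum, Finset.mul_sum]
  have e0 : ((-1:ℂ)^0 * ((0).factorial : ℂ) * ((m+1).choose 0 : ℂ) * ((n+1).choose 0 : ℂ) *
        r ^ 0 * x ^ (m+1-0) * y ^ (n+1-0))
      = x * ((-1:ℂ)^0 * ((0).factorial : ℂ) * (m.choose 0 : ℂ) * ((n+1).choose 0 : ℂ) *
        r ^ 0 * x ^ (m-0) * y ^ (n+1-0)) := by
    simp [pow_succ]; ring
  rw [e0, add_sub_right_comm, ← Finset.sum_sub_distrib]
  refine congrArg (· + _) (Finset.sum_congr rfl fun k hk => ?_)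
  simp only [mem_range] at hk
  have hkm : k ≤ m := by omega
  have hkn : k ≤ n := by omega
  have em : m + 1 - (k+1) = m - k := by omega
  have en : n + 1 - (k+1) = n - k := by omega
  rw [em, en, Nat.choose_succ_succ m k]
  push_cast
  rcases Nat.lt_or_ge k m with h1 | h1
  · have ex : m - k = (m - (k+1)) + 1 := by omega
    rw [ex, pow_succ]
    linear_combination ((-1:ℂ))^(k+1) * r^(k+1) * x^(m-(k+1)) * x * y^(n-k) * (m.choose k : ℂ) * hfac n k
  · have hk2 : k = m := by omega
    subst hk2
    simp only [Nat.choose_succ_self, Nat.cast_zero, Nat.sub_self, pow_zero, Nat.choose_self,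
      Nat.cast_one]
    linear_combination ((-1:ℂ))^(k+1) * r^(k+1) * y^(n-k) * hfac n k

lemma x_mul (a b : ℕ) (x y r : ℂ) :
    x * J a b x y r = J (a+1) b x y r + (b : ℂ) * r * J a (b-1) x y r := by
  cases b with
  | zero => simp [J_zero_right, pow_succ, mul_comm]
  | succ b =>
    rw [rec_left_succ a b x y r]
    have : b + 1 - 1 = b := rfl
    rw [this]
    push_cast
    ring

lemma y_mul (a b : ℕ) (x y r : ℂ) :
    y * J a b x y r = J a (b+1) x y r + (a : ℂ) * r * J (a-1) b x y r := by
  rw [J_swap a b, J_swap a (b+1), J_swap (a-1) b]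
  exact x_mul b a y x r

-- unconditional factorial/choose identities
lemma hfacA (n j : ℕ) :
    (((j+1).factorial : ℕ) : ℂ) * ((n.choose (j+1) : ℕ) : ℂ)
      = ((n - j : ℕ) : ℂ) * ((j.factorial : ℂ) * ((n.choose j : ℕ) : ℂ)) := by
  have key : (j+1).factorial * n.choose (j+1) = (n - j) * (j.factorial * n.choose j) := by
    rw [Nat.factorial_succ]
    calc (j+1) * j.factorial * n.choose (j+1)
        = j.factorial * (n.choose (j+1) * (j+1)) := by ring
      _ = j.factorial * (n.choose j * (n - j)) := by rw [Nat.choose_succ_right_eq]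
      _ = (n - j) * (j.factorial * n.choose j) := by ring
  exact_mod_cast key

lemma hfacB (q i : ℕ) : q * (q-1).choose i = (q - i) * q.choose i := by
  cases q with
  | zero =>
    cases i <;> simp
  | succ q =>
    rcases le_or_gt i q with h | h
    · calc (q+1) * q.choose i = (q+1).choose (i+1) * (i+1) := (Nat.add_one_mul_choose_eq q i)
        _ = (q+1).choose i * (q+1-i) := Nat.choose_succ_right_eq (q+1) i
        _ = (q+1-i) * (q+1).choose i := by ring
    · rw [Nat.choose_eq_zero_of_lt (show q + 1 - 1 < i by omega),
          show q + 1 - i = 0 by omega]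
      ring

lemma keyNat (n q i j : ℕ) :
    q.choose i * ((n + q - i - j) * (j.factorial * n.choose j))
      = (j+1).factorial * n.choose (j+1) * q.choose i
        + q * ((q-1).choose i * (j.factorial * n.choose j)) := by
  rcases le_or_gt i q with hi | hi
  · rcases le_or_gt j n with hj | hj
    · have e1 : (j+1).factorial * n.choose (j+1) = (n - j) * (j.factorial * n.choose j) := by
        rw [Nat.factorial_succ]
        calc (j+1) * j.factorial * n.choose (j+1)
            = j.factorial * (n.choose (j+1) * (j+1)) := by ring
          _ = j.factorial * (n.choose j * (n - j)) := by rw [Nat.choose_succ_right_eq]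
          _ = (n - j) * (j.factorial * n.choose j) := by ring
      have e2 : q * (q-1).choose i = (q - i) * q.choose i := hfacB q i
      have e3 : n + q - i - j = (n - j) + (q - i) := by omega
      rw [e1, e3]
      calc q.choose i * (((n-j) + (q-i)) * (j.factorial * n.choose j))
          = (n-j) * (j.factorial * n.choose j) * q.choose i
            + ((q-i) * q.choose i) * (j.factorial * n.choose j) := by ring
        _ = _ := by rw [← e2]; ring
    · rw [Nat.choose_eq_zero_of_lt hj, Nat.choose_eq_zero_of_lt (show n < j + 1 by omega)]
      ring
  · rw [Nat.choose_eq_zero_of_lt hi, Nat.choose_eq_zero_of_lt (show q - 1 < i by omega)]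
    ring

noncomputable def S (m n p q : ℕ) (x y r : ℂ) : ℂ :=
  ∑ i ∈ Finset.range (m+1), ∑ j ∈ Finset.range (n+1),
    (Nat.factorial i : ℂ) * (Nat.factorial j : ℂ) * (Nat.choose m i : ℂ) * (Nat.choose q i : ℂ) *
      (Nat.choose n j : ℂ) * (Nat.choose p j : ℂ) * r ^ (i+j) *
      J (m + p - i - j) (n + q - i - j) x y r

lemma S_min (m n p q : ℕ) (x y r : ℂ) :
    S m n p q x y r
      = ∑ i ∈ Finset.range (min m q + 1), ∑ j ∈ Finset.range (min n p + 1),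
          (Nat.factorial i : ℂ) * (Nat.factorial j : ℂ) *
            (Nat.choose m i : ℂ) * (Nat.choose q i : ℂ) *
            (Nat.choose n j : ℂ) * (Nat.choose p j : ℂ) * r ^ (i + j) *
            J (m + p - i - j) (n + q - i - j) x y r := by
  rw [S]
  symm
  calc ∑ i ∈ Finset.range (min m q + 1), ∑ j ∈ Finset.range (min n p + 1),
          (Nat.factorial i : ℂ) * (Nat.factorial j : ℂ) *
            (Nat.choose m i : ℂ) * (Nat.choose q i : ℂ) *
            (Nat.choose n j : ℂ) * (Nat.choose p j : ℂ) * r ^ (i + j) *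
            J (m + p - i - j) (n + q - i - j) x y r
      = ∑ i ∈ Finset.range (min m q + 1), ∑ j ∈ Finset.range (n + 1),
          (Nat.factorial i : ℂ) * (Nat.factorial j : ℂ) *
            (Nat.choose m i : ℂ) * (Nat.choose q i : ℂ) *
            (Nat.choose n j : ℂ) * (Nat.choose p j : ℂ) * r ^ (i + j) *
            J (m + p - i - j) (n + q - i - j) x y r := by
        refine Finset.sum_congr rfl fun i _ => ?_
        apply Finset.sum_subset
        · intro j hj; simp only [mem_range] at *; omega
        · intro j hj hj2
          simp only [mem_range, not_lt] at hj hj2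
          rw [Nat.choose_eq_zero_of_lt (show p < j by omega)]
          ring
    _ = _ := by
        apply Finset.sum_subset
        · intro i hi; simp only [mem_range] at *; omega
        · intro i hi hi2
          simp only [mem_range, not_lt] at hi hi2
          refine Finset.sum_eq_zero fun j _ => ?_
          rw [Nat.choose_eq_zero_of_lt (show q < i by omega)]
          ring

lemma S_zero (m n : ℕ) (x y r : ℂ) : S m n 0 0 x y r = J m n x y r := by
  rw [S_min]
  simp [J]

lemma key0 (q m n : ℕ) (x y r : ℂ) :
    J m n x y r * J 0 q x y r = S m n 0 q x y r := by
  induction q with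
  | zero =>
    rw [J_zero_left, S_zero]
    simp
  | succ q IH =>
    have hy : J 0 (q+1) x y r = y * J 0 q x y r := by
      rw [J_zero_left, J_zero_left, pow_succ]; ring
    rw [hy, show J m n x y r * (y * J 0 q x y r) = y * (J m n x y r * J 0 q x y r) by ring, IH]
    -- now: y * S m n 0 q = S m n 0 (q+1)
    have expand : y * S m n 0 q x y r
        = (∑ i ∈ Finset.range (m+1), ∑ j ∈ Finset.range (n+1),
            (Nat.factorial i : ℂ) * (Nat.factorial j : ℂ) * (Nat.choose m i : ℂ) *
              (Nat.choose q i : ℂ) * (Nat.choose n j : ℂ) * (Nat.choose 0 j : ℂ) * r ^ (i+j) *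
              J (m + 0 - i - j) ((n + q - i - j) + 1) x y r)
          + (∑ i ∈ Finset.range (m+1), ∑ j ∈ Finset.range (n+1),
            (Nat.factorial i : ℂ) * (Nat.factorial j : ℂ) * (Nat.choose m i : ℂ) *
              (Nat.choose q i : ℂ) * (Nat.choose n j : ℂ) * (Nat.choose 0 j : ℂ) * r ^ (i+j) *
              (((m + 0 - i - j : ℕ) : ℂ) * r * J ((m + 0 - i - j) - 1) (n + q - i - j) x y r)) := by
      rw [S, Finset.mul_sum, ← Finset.sum_add_distrib]
      refine Finset.sum_congr rfl fun i _ => ?_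
      rw [Finset.mul_sum, ← Finset.sum_add_distrib]
      refine Finset.sum_congr rfl fun j _ => ?_
      rw [show ∀ C A : ℂ, y * (C * A) = C * (y * A) from fun C A => by ring, y_mul]
      ring
    rw [expand]
    -- split target
    have split : S m n 0 (q+1) x y r
        = (∑ i ∈ Finset.range (m+1), ∑ j ∈ Finset.range (n+1),
            (Nat.factorial i : ℂ) * (Nat.factorial j : ℂ) * (Nat.choose m i : ℂ) *
              (Nat.choose q i : ℂ) * (Nat.choose n j : ℂ) * (Nat.choose 0 j : ℂ) * r ^ (i+j) *
              J (m + 0 - i - j) (n + (q+1) - i - j) x y r)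
          + (∑ i ∈ Finset.range (m+1), ∑ j ∈ Finset.range (n+1),
            (Nat.factorial (i+1) : ℂ) * (Nat.factorial j : ℂ) * (Nat.choose m (i+1) : ℂ) *
              (Nat.choose q i : ℂ) * (Nat.choose n j : ℂ) * (Nat.choose 0 j : ℂ) * r ^ ((i+1)+j) *
              J (m + 0 - (i+1) - j) (n + (q+1) - (i+1) - j) x y r) := by
      rw [S]
      rw [Finset.sum_range_succ' _ m]
      -- LHS = Σ_{i∈range m} F(i+1) + F 0
      conv_rhs => rw [Finset.sum_range_succ' _ m]
      conv_rhs => rw [Finset.sum_range_succ _ m]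
      -- RHS = (Σ_{i∈range m} P1(i+1) + P1 0) + (Σ_{i∈range m} P2 i + P2 m)
      have hP2m : (∑ j ∈ Finset.range (n+1),
          (Nat.factorial (m+1) : ℂ) * (Nat.factorial j : ℂ) * (Nat.choose m (m+1) : ℂ) *
            (Nat.choose q m : ℂ) * (Nat.choose n j : ℂ) * (Nat.choose 0 j : ℂ) * r ^ ((m+1)+j) *
            J (m + 0 - (m+1) - j) (n + (q+1) - (m+1) - j) x y r) = 0 := by
        refine Finset.sum_eq_zero fun j _ => ?_
        rw [Nat.choose_succ_self]
        push_cast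
        ring
      rw [hP2m]
      rw [show ∀ a b c : ℂ, a + b + (c + 0) = a + c + b from fun a b c => by ring,
          ← Finset.sum_add_distrib]
      refine congrArg₂ (· + ·) (Finset.sum_congr rfl fun i _ => ?_)
        (Finset.sum_congr rfl fun j _ => ?_)
      · rw [← Finset.sum_add_distrib]
        refine Finset.sum_congr rfl fun j _ => ?_
        rw [Nat.choose_succ_succ q i]
        push_cast
        ring
      · norm_num
    rw [split]
    -- match the two pairs of sums termwise
    refine congrArg₂ (· + ·) ?_ ?_
    · refine Finset.sum_congr rfl fun i hi => Finset.sum_congr rfl fun j hj => ?_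
      simp only [mem_range] at hi hj
      rcases le_or_gt i q with h | h
      · rw [show (n + q - i - j) + 1 = n + (q+1) - i - j by omega]
      · rw [Nat.choose_eq_zero_of_lt h]
        ring
    · refine Finset.sum_congr rfl fun i hi => Finset.sum_congr rfl fun j hj => ?_
      simp only [mem_range] at hi hj
      rw [show (m + 0 - i - j) - 1 = m + 0 - (i+1) - j by omega,
          show n + q - i - j = n + (q+1) - (i+1) - j by omega]
      rcases Nat.eq_zero_or_pos j with h | h
      · subst h
        rw [show m + 0 - i - 0 = m - i by omega]
        linear_combination (-(Nat.choose q i : ℂ) * (Nat.choose n 0 : ℂ) * (Nat.choose 0 0 : ℂ) *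
          (Nat.factorial 0 : ℂ) * r ^ ((i+1)+0) *
          J (m + 0 - (i+1) - 0) (n + (q+1) - (i+1) - 0) x y r) * hfacA m i
      · rw [Nat.choose_eq_zero_of_lt (show 0 < j from h)]
        ring

lemma rec_left_gen (p q : ℕ) (x y r : ℂ) :
    J (p+1) q x y r = x * J p q x y r - (q:ℂ) * r * J p (q-1) x y r := by
  cases q with
  | zero => simp [J_zero_right, pow_succ, mul_comm]
  | succ q =>
    rw [rec_left_succ p q x y r, show q + 1 - 1 = q from rfl]
    push_cast
    ring

lemma key (p : ℕ) : ∀ (q m n : ℕ) (x y r : ℂ),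
    J m n x y r * J p q x y r = S m n p q x y r := by
  induction p with
  | zero => exact fun q m n x y r => key0 q m n x y r
  | succ p IH =>
    intro q m n x y r
    have expand : x * S m n p q x y r
        = (∑ i ∈ Finset.range (m+1), ∑ j ∈ Finset.range (n+1),
            (Nat.factorial i : ℂ) * (Nat.factorial j : ℂ) * (Nat.choose m i : ℂ) *
              (Nat.choose q i : ℂ) * (Nat.choose n j : ℂ) * (Nat.choose p j : ℂ) * r ^ (i+j) *
              J ((m + p - i - j) + 1) (n + q - i - j) x y r)
          + (∑ i ∈ Finset.range (m+1), ∑ j ∈ Finset.range (n+1),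
            (Nat.factorial i : ℂ) * (Nat.factorial j : ℂ) * (Nat.choose m i : ℂ) *
              (Nat.choose q i : ℂ) * (Nat.choose n j : ℂ) * (Nat.choose p j : ℂ) * r ^ (i+j) *
              (((n + q - i - j : ℕ) : ℂ) * r * J (m + p - i - j) ((n + q - i - j) - 1) x y r)) := by
      rw [S, Finset.mul_sum, ← Finset.sum_add_distrib]
      refine Finset.sum_congr rfl fun i _ => ?_
      rw [Finset.mul_sum, ← Finset.sum_add_distrib]
      refine Finset.sum_congr rfl fun j _ => ?_
      rw [show ∀ C A : ℂ, x * (C * A) = C * (x * A) from fun C A => by ring, x_mul]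
      ring
    have split : S m n (p+1) q x y r
        = (∑ i ∈ Finset.range (m+1), ∑ j ∈ Finset.range (n+1),
            (Nat.factorial i : ℂ) * (Nat.factorial j : ℂ) * (Nat.choose m i : ℂ) *
              (Nat.choose q i : ℂ) * (Nat.choose n j : ℂ) * (Nat.choose p j : ℂ) * r ^ (i+j) *
              J (m + (p+1) - i - j) (n + q - i - j) x y r)
          + (∑ i ∈ Finset.range (m+1), ∑ j ∈ Finset.range (n+1),
            (Nat.factorial i : ℂ) * (Nat.factorial (j+1) : ℂ) * (Nat.choose m i : ℂ) *
              (Nat.choose q i : ℂ) * (Nat.choose n (j+1) : ℂ) * (Nat.choose p j : ℂ) * r ^ (i+(j+1)) *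
              J (m + (p+1) - i - (j+1)) (n + q - i - (j+1)) x y r) := by
      rw [S, ← Finset.sum_add_distrib]
      refine Finset.sum_congr rfl fun i _ => ?_
      rw [Finset.sum_range_succ' _ n]
      conv_rhs => rw [Finset.sum_range_succ' _ n]
      conv_rhs => rw [Finset.sum_range_succ _ n]
      rw [show (Nat.factorial i : ℂ) * (Nat.factorial (n+1) : ℂ) * (Nat.choose m i : ℂ) *
              (Nat.choose q i : ℂ) * (Nat.choose n (n+1) : ℂ) * (Nat.choose p n : ℂ) * r ^ (i+(n+1)) *
              J (m + (p+1) - i - (n+1)) (n + q - i - (n+1)) x y r = 0 by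
            rw [Nat.choose_succ_self]; push_cast; ring,
          show ∀ a b c : ℂ, a + b + (c + 0) = a + c + b from fun a b c => by ring,
          ← Finset.sum_add_distrib]
      refine congrArg₂ (· + ·) (Finset.sum_congr rfl fun j _ => ?_) ?_
      · rw [Nat.choose_succ_succ p j]
        push_cast
        ring
      · norm_num
    have eqA : (∑ i ∈ Finset.range (m+1), ∑ j ∈ Finset.range (n+1),
            (Nat.factorial i : ℂ) * (Nat.factorial j : ℂ) * (Nat.choose m i : ℂ) *
              (Nat.choose q i : ℂ) * (Nat.choose n j : ℂ) * (Nat.choose p j : ℂ) * r ^ (i+j) *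
              J ((m + p - i - j) + 1) (n + q - i - j) x y r)
        = (∑ i ∈ Finset.range (m+1), ∑ j ∈ Finset.range (n+1),
            (Nat.factorial i : ℂ) * (Nat.factorial j : ℂ) * (Nat.choose m i : ℂ) *
              (Nat.choose q i : ℂ) * (Nat.choose n j : ℂ) * (Nat.choose p j : ℂ) * r ^ (i+j) *
              J (m + (p+1) - i - j) (n + q - i - j) x y r) := by
      refine Finset.sum_congr rfl fun i hi => Finset.sum_congr rfl fun j hj => ?_
      simp only [mem_range] at hi hj
      rcases le_or_gt j p with h | h
      · rw [show (m + p - i - j) + 1 = m + (p+1) - i - j by omega]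
      · rw [Nat.choose_eq_zero_of_lt h]
        ring
    have eqB : (∑ i ∈ Finset.range (m+1), ∑ j ∈ Finset.range (n+1),
            (Nat.factorial i : ℂ) * (Nat.factorial j : ℂ) * (Nat.choose m i : ℂ) *
              (Nat.choose q i : ℂ) * (Nat.choose n j : ℂ) * (Nat.choose p j : ℂ) * r ^ (i+j) *
              (((n + q - i - j : ℕ) : ℂ) * r * J (m + p - i - j) ((n + q - i - j) - 1) x y r))
        = (∑ i ∈ Finset.range (m+1), ∑ j ∈ Finset.range (n+1),
            (Nat.factorial i : ℂ) * (Nat.factorial (j+1) : ℂ) * (Nat.choose m i : ℂ) *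
              (Nat.choose q i : ℂ) * (Nat.choose n (j+1) : ℂ) * (Nat.choose p j : ℂ) * r ^ (i+(j+1)) *
              J (m + (p+1) - i - (j+1)) (n + q - i - (j+1)) x y r)
          + (q : ℂ) * r * S m n p (q-1) x y r := by
      rw [S, Finset.mul_sum, ← Finset.sum_add_distrib]
      refine Finset.sum_congr rfl fun i hi => ?_
      rw [Finset.mul_sum, ← Finset.sum_add_distrib]
      refine Finset.sum_congr rfl fun j hj => ?_
      have kc : (q.choose i : ℂ) * (((n + q - i - j : ℕ) : ℂ) * ((j.factorial : ℂ) * (n.choose j : ℂ)))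
          = ((j+1).factorial : ℂ) * (n.choose (j+1) : ℂ) * (q.choose i : ℂ)
            + (q : ℂ) * (((q-1).choose i : ℂ) * ((j.factorial : ℂ) * (n.choose j : ℂ))) := by
        exact_mod_cast congrArg (Nat.cast (R := ℂ)) (keyNat n q i j)
      rw [show m + (p+1) - i - (j+1) = m + p - i - j by omega,
          show n + q - i - (j+1) = (n + q - i - j) - 1 by omega]
      rcases Nat.eq_zero_or_pos q with hq | hq
      · subst hq
        push_cast at kc ⊢
        linear_combination ((Nat.factorial i : ℂ) * (Nat.choose m i : ℂ) * (Nat.choose p j : ℂ) *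
          r ^ (i+j) * r * J (m + p - i - j) ((n + 0 - i - j) - 1) x y r) * kc
      · rw [show n + (q-1) - i - j = (n + q - i - j) - 1 by omega]
        linear_combination ((Nat.factorial i : ℂ) * (Nat.choose m i : ℂ) * (Nat.choose p j : ℂ) *
          r ^ (i+j) * r * J (m + p - i - j) ((n + q - i - j) - 1) x y r) * kc
    calc J m n x y r * J (p+1) q x y r
        = x * (J m n x y r * J p q x y r)
          - (q:ℂ) * r * (J m n x y r * J p (q-1) x y r) := by rw [rec_left_gen]; ring
      _ = x * S m n p q x y r - (q:ℂ) * r * S m n p (q-1) x y r := by rw [IH, IH]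
      _ = S m n (p+1) q x y r := by rw [expand, eqA, eqB, split]; ring

/-- Product formula for complex Hermite polynomials:
`J_{m,n}·J_{p,q} = Σ_{i≤min(m,q)} Σ_{j≤min(n,p)} i!j!·C(m,i)C(q,i)C(n,j)C(p,j)·ρ^{i+j}·
J_{m+p−i−j, n+q−i−j}`. -/
theorem complexHermite_product_formula (m n p q : ℕ) (z : ℂ) (ρ : ℝ) :
    complexHermite m n z ρ * complexHermite p q z ρ
      = ∑ i ∈ Finset.range (min m q + 1), ∑ j ∈ Finset.range (min n p + 1),
          (Nat.factorial i : ℂ) * (Nat.factorial j : ℂ) *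
            (Nat.choose m i : ℂ) * (Nat.choose q i : ℂ) *
            (Nat.choose n j : ℂ) * (Nat.choose p j : ℂ) * (ρ : ℂ) ^ (i + j) *
            complexHermite (m + p - i - j) (n + q - i - j) z ρ := by
  have h1 : ∀ a b : ℕ, complexHermite a b z ρ = J a b z (starRingEnd ℂ z) ((ρ : ℂ)) :=
    fun a b => rfl
  simp only [h1]
  rw [key p q m n z (starRingEnd ℂ z) ((ρ : ℂ)), S_min]
end

section
/- Squared modulus expansion of complex Hermite polynomials: for all m, n ∈ ℕ, all z ∈ ℂ and ρ ∈ ℝ, |J_{m,n}(z,ρ)|² = Σ_{i=0}^{m} Σ_{j=0}^{n} (m choose i)² (n choose j)² i! j! ρ^{i+j} J_{m+n−i−j, m+n−i−j}(z,ρ); in particular conj(J_{m,n}(z,ρ)) = J_{n,m}(z,ρ). -/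
open MeasureTheory ProbabilityTheory Complex Finset

namespace CHAux

/-- summand -/
noncomputable def T (z : ℂ) (ρ : ℝ) (m n k : ℕ) : ℂ :=
  (-1 : ℂ) ^ k * (Nat.factorial k : ℂ) * (Nat.choose m k : ℂ) * (Nat.choose n k : ℂ) *
      (ρ : ℂ) ^ k * z ^ (m - k) * (starRingEnd ℂ z) ^ (n - k)

variable (z : ℂ) (ρ : ℝ)

lemma J_eq (m n B : ℕ) (h : min m n ≤ B) :
    complexHermite m n z ρ = ∑ k ∈ Finset.range (B + 1), T z ρ m n k := by
  rw [complexHermite]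
  simp only [T]
  apply Finset.sum_subset
  · exact Finset.range_subset_range.2 (by omega)
  · intro k hk hk'
    simp only [Finset.mem_range] at hk hk'
    have : m < k ∨ n < k := by omega
    rcases this with h | h <;> simp [Nat.choose_eq_zero_of_lt h]

lemma J_m0 (m : ℕ) : complexHermite m 0 z ρ = z ^ m := by
  simp [complexHermite]

lemma conj_J (m n : ℕ) :
    (starRingEnd ℂ) (complexHermite m n z ρ) = complexHermite n m z ρ := by
  rw [complexHermite, complexHermite, min_comm n m, map_sum]
  refine Finset.sum_congr rfl fun k _ => ?_
  simp only [map_mul, map_pow, map_neg, map_one, Complex.conj_conj, Complex.conj_ofReal,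
    map_natCast]
  ring


lemma nat_id1 (m k : ℕ) : (k+1) * Nat.choose (m+1) (k+1) = (m+1) * Nat.choose m k := by
  rw [mul_comm (k+1)]
  exact (Nat.add_one_mul_choose_eq m k).symm

lemma natKey (m n k : ℕ) :
    (k+1).factorial * ((m+1).choose (k+1)) * ((n+1).choose (k+1))
      = (k+1).factorial * ((m+1).choose (k+1)) * (n.choose (k+1))
        + (m+1) * (k.factorial * (m.choose k) * (n.choose k)) := by
  rw [Nat.choose_succ_succ n k]
  have h1 : (k+1).factorial * ((m+1).choose (k+1)) * (n.choose k)
      = (m+1) * (k.factorial * (m.choose k) * (n.choose k)) := by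
    rw [Nat.factorial_succ]
    calc (k+1) * k.factorial * ((m+1).choose (k+1)) * (n.choose k)
        = ((k+1) * ((m+1).choose (k+1))) * k.factorial * (n.choose k) := by ring
      _ = ((m+1) * (m.choose k)) * k.factorial * (n.choose k) := by rw [nat_id1]
      _ = (m+1) * (k.factorial * (m.choose k) * (n.choose k)) := by ring
  calc (k+1).factorial * ((m+1).choose (k+1)) * (n.choose k + n.choose (k+1))
      = (k+1).factorial * ((m+1).choose (k+1)) * (n.choose (k+1))
        + (k+1).factorial * ((m+1).choose (k+1)) * (n.choose k) := by ring
    _ = _ := by rw [h1]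

lemma recB (m n : ℕ) : complexHermite m (n+1) z ρ =
    (starRingEnd ℂ z) * complexHermite m n z ρ - (ρ : ℂ) * m * complexHermite (m-1) n z ρ := by
  rcases m with _ | m
  · simp [complexHermite, pow_succ]; ring
  · simp only [Nat.add_sub_cancel, Nat.cast_add, Nat.cast_one]
    rw [eq_sub_iff_add_eq]
    rw [J_eq z ρ (m+1) (n+1) (m+1) (by omega), J_eq z ρ (m+1) n (m+1) (by omega),
      J_eq z ρ m n m (by omega)]
    rw [Finset.sum_range_succ' (fun k => T z ρ (m+1) (n+1) k) (m+1), Finset.mul_sum,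
      Finset.mul_sum, Finset.sum_range_succ' (fun k => (starRingEnd ℂ z) * T z ρ (m+1) n k) (m+1)]
    have h0 : T z ρ (m+1) (n+1) 0 = (starRingEnd ℂ z) * T z ρ (m+1) n 0 := by
      simp [T, pow_succ]; ring
    rw [h0]
    rw [add_right_comm, ← Finset.sum_add_distrib]
    congr 1
    refine Finset.sum_congr rfl fun k hk => ?_
    simp only [Finset.mem_range] at hk
    have ckey : ((k+1).factorial * ((m+1).choose (k+1)) * ((n+1).choose (k+1)) : ℂ)
        = ((k+1).factorial : ℂ) * ((m+1).choose (k+1) : ℂ) * (n.choose (k+1) : ℂ)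
          + ((m+1) : ℂ) * ((k.factorial : ℂ) * (m.choose k : ℂ) * (n.choose k : ℂ)) := by
      exact_mod_cast congrArg (Nat.cast : ℕ → ℂ) (natKey m n k)
    have hz : ((m+1) - (k+1) : ℕ) = m - k := by omega
    rcases lt_trichotomy k n with h | h | h
    · have e2 : ((n+1) - (k+1) : ℕ) = (n - (k+1)) + 1 := by omega
      have e3 : (n - k : ℕ) = (n - (k+1)) + 1 := by omega
      simp only [T, hz, e2, e3, pow_succ]
      push_cast at ckey
      linear_combination ((-1:ℂ))^(k+1) * (ρ:ℂ)^(k+1) * z^(m-k) *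
        (starRingEnd ℂ z)^(n-(k+1)) * (starRingEnd ℂ z) * ckey
    · subst h
      have e4 : ((k+1) - (k+1) : ℕ) = 0 := by omega
      have e5 : (k - k : ℕ) = 0 := by omega
      simp only [T, hz, e4, e5, pow_zero, Nat.choose_succ_self, Nat.cast_zero,
        Nat.choose_self, Nat.cast_one]
      push_cast [Nat.choose_succ_self, Nat.choose_self] at ckey
      linear_combination ((-1:ℂ))^(k+1) * (ρ:ℂ)^(k+1) * z^(m-k) * ckey
    · have c1 : (n+1).choose (k+1) = 0 := Nat.choose_eq_zero_of_lt (by omega)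
      have c2 : n.choose k = 0 := Nat.choose_eq_zero_of_lt (by omega)
      have c3 : n.choose (k+1) = 0 := Nat.choose_eq_zero_of_lt (by omega)
      simp [T, c1, c2, c3]

lemma recA (m n : ℕ) : complexHermite (m+1) n z ρ =
    z * complexHermite m n z ρ - (ρ : ℂ) * n * complexHermite m (n-1) z ρ := by
  have h := congrArg (starRingEnd ℂ) (recB z ρ n m)
  rw [map_sub, map_mul, map_mul, map_mul, conj_J, conj_J, conj_J, Complex.conj_conj,
    Complex.conj_ofReal, map_natCast] at h
  exact h

lemma absA (M N : ℕ) : z * complexHermite M N z ρ =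
    complexHermite (M+1) N z ρ + (ρ : ℂ) * N * complexHermite M (N-1) z ρ := by
  rw [recA]; ring

lemma absB (M N : ℕ) : (starRingEnd ℂ z) * complexHermite M N z ρ =
    complexHermite M (N+1) z ρ + (ρ : ℂ) * M * complexHermite (M-1) N z ρ := by
  rw [recB]; ring

lemma Zlem (m M N : ℕ) : z ^ m * complexHermite M N z ρ
    = ∑ i ∈ Finset.range (m+1), (i.factorial : ℂ) * (m.choose i : ℂ) * (N.choose i : ℂ) *
        (ρ : ℂ)^i * complexHermite (m + M - i) (N - i) z ρ := by
  induction m with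
  | zero => simp
  | succ m ih =>
    have expand : z ^ (m+1) * complexHermite M N z ρ
        = z * (z ^ m * complexHermite M N z ρ) := by ring
    rw [expand, ih, Finset.mul_sum]
    have hterm : ∀ i ∈ Finset.range (m+1),
        z * ((i.factorial : ℂ) * (m.choose i : ℂ) * (N.choose i : ℂ) * (ρ:ℂ)^i *
            complexHermite (m + M - i) (N - i) z ρ)
        = (i.factorial : ℂ) * (m.choose i : ℂ) * (N.choose i : ℂ) * (ρ:ℂ)^i *
            complexHermite (m + M - i + 1) (N - i) z ρ
          + (i.factorial : ℂ) * (m.choose i : ℂ) * (N.choose i : ℂ) * (ρ:ℂ)^i *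
            ((ρ:ℂ) * ((N - i : ℕ) : ℂ) * complexHermite (m + M - i) (N - i - 1) z ρ) := by
      intro i _
      have := absA z ρ (m + M - i) (N - i)
      calc z * ((i.factorial : ℂ) * (m.choose i : ℂ) * (N.choose i : ℂ) * (ρ:ℂ)^i *
            complexHermite (m + M - i) (N - i) z ρ)
          = (i.factorial : ℂ) * (m.choose i : ℂ) * (N.choose i : ℂ) * (ρ:ℂ)^i *
            (z * complexHermite (m + M - i) (N - i) z ρ) := by ring
        _ = _ := by rw [this]; ring
    rw [Finset.sum_congr rfl hterm, Finset.sum_add_distrib]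
    rw [Finset.sum_range_succ' (fun i => (i.factorial : ℂ) * ((m+1).choose i : ℂ) *
      (N.choose i : ℂ) * (ρ:ℂ)^i * complexHermite (m + 1 + M - i) (N - i) z ρ) (m+1)]
    have hsplit : ∀ i ∈ Finset.range (m+1),
        ((i+1).factorial : ℂ) * ((m+1).choose (i+1) : ℂ) * (N.choose (i+1) : ℂ) * (ρ:ℂ)^(i+1) *
          complexHermite (m + 1 + M - (i+1)) (N - (i+1)) z ρ
        = ((i+1).factorial : ℂ) * (m.choose (i+1) : ℂ) * (N.choose (i+1) : ℂ) * (ρ:ℂ)^(i+1) *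
            complexHermite (m + 1 + M - (i+1)) (N - (i+1)) z ρ
          + (i.factorial : ℂ) * (m.choose i : ℂ) * (N.choose i : ℂ) * (ρ:ℂ)^i *
            ((ρ:ℂ) * ((N - i : ℕ) : ℂ) * complexHermite (m + M - i) (N - i - 1) z ρ) := by
      intro i _
      have hidx1 : m + 1 + M - (i+1) = m + M - i := by omega
      have hidx2 : N - (i+1) = N - i - 1 := by omega
      have hP : (((m+1).choose (i+1) : ℕ) : ℂ) = (m.choose i : ℂ) + (m.choose (i+1) : ℂ) := by
        exact_mod_cast congrArg (Nat.cast : ℕ → ℂ) (Nat.choose_succ_succ m i)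
      have hN : ((N.choose (i+1) * (i+1) : ℕ) : ℂ) = ((N.choose i * (N - i) : ℕ) : ℂ) :=
        congrArg (Nat.cast : ℕ → ℂ) (Nat.choose_succ_right_eq N i)
      rw [hidx1, hidx2, hP]
      push_cast [Nat.factorial_succ]
      push_cast at hN
      linear_combination ((i.factorial : ℂ) * (m.choose i : ℂ) * (ρ:ℂ)^(i+1) *
        complexHermite (m + M - i) (N - i - 1) z ρ) * hN
    rw [Finset.sum_congr rfl hsplit, Finset.sum_add_distrib]
    have hA : ∑ i ∈ Finset.range (m+1), (i.factorial : ℂ) * (m.choose i : ℂ) * (N.choose i : ℂ) *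
          (ρ:ℂ)^i * complexHermite (m + M - i + 1) (N - i) z ρ
        = (∑ i ∈ Finset.range (m+1), ((i+1).factorial : ℂ) * (m.choose (i+1) : ℂ) *
            (N.choose (i+1) : ℂ) * (ρ:ℂ)^(i+1) *
            complexHermite (m + 1 + M - (i+1)) (N - (i+1)) z ρ)
          + (0:ℕ).factorial * (m.choose 0 : ℂ) * (N.choose 0 : ℂ) * (ρ:ℂ)^0 *
            complexHermite (m + 1 + M - 0) (N - 0) z ρ := by
      rw [← Finset.sum_range_succ' (fun i => (i.factorial : ℂ) * (m.choose i : ℂ) *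
        (N.choose i : ℂ) * (ρ:ℂ)^i * complexHermite (m + 1 + M - i) (N - i) z ρ) (m+1)]
      rw [Finset.sum_range_succ (fun i => (i.factorial : ℂ) * (m.choose i : ℂ) *
        (N.choose i : ℂ) * (ρ:ℂ)^i * complexHermite (m + 1 + M - i) (N - i) z ρ) (m+1)]
      norm_num [Nat.choose_succ_self]
      refine Finset.sum_congr rfl fun i hi => ?_
      simp only [Finset.mem_range] at hi
      have : m + M - i + 1 = m + 1 + M - i := by omega
      rw [this]
    rw [hA]
    have h0 : ((0:ℕ).factorial : ℂ) * ((m+1).choose 0 : ℂ) * (N.choose 0 : ℂ) * (ρ:ℂ)^0 *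
        complexHermite (m + 1 + M - 0) (N - 0) z ρ
        = (0:ℕ).factorial * (m.choose 0 : ℂ) * (N.choose 0 : ℂ) * (ρ:ℂ)^0 *
            complexHermite (m + 1 + M - 0) (N - 0) z ρ := by norm_num
    rw [h0]
    ring

lemma h3 (m i : ℕ) : m.choose i * (m - i) = m * ((m-1).choose i) := by
  rcases m with _ | t
  · simp
  · simp only [Nat.add_sub_cancel]
    rw [← Nat.choose_succ_right_eq]
    exact (Nat.add_one_mul_choose_eq t i).symm

lemma keyL (m M i j : ℕ) :
    m.choose i * (M.choose j) * (m + M - i - j)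
      = m.choose i * ((j+1) * M.choose (j+1)) + m * ((m-1).choose i * M.choose j) := by
  by_cases hi : i ≤ m
  · by_cases hj : j ≤ M
    · have hsub : m + M - i - j = (M - j) + (m - i) := by omega
      rw [hsub]
      calc m.choose i * M.choose j * ((M - j) + (m - i))
          = m.choose i * (M.choose j * (M - j)) + (m.choose i * (m - i)) * M.choose j := by
            ring
        _ = m.choose i * (M.choose (j+1) * (j+1)) + (m * ((m-1).choose i)) * M.choose j := by
            rw [← Nat.choose_succ_right_eq, h3]
        _ = _ := by ring
    · have c1 : M.choose j = 0 := Nat.choose_eq_zero_of_lt (by omega)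
      have c2 : M.choose (j+1) = 0 := Nat.choose_eq_zero_of_lt (by omega)
      simp [c1, c2]
  · have c1 : m.choose i = 0 := Nat.choose_eq_zero_of_lt (by omega)
    have c2 : (m-1).choose i = 0 := Nat.choose_eq_zero_of_lt (by omega)
    simp [c1, c2]

lemma prod_formula (n : ℕ) : ∀ m M N : ℕ,
    complexHermite m n z ρ * complexHermite M N z ρ
      = ∑ i ∈ Finset.range (m+1), ∑ j ∈ Finset.range (n+1),
          (i.factorial : ℂ) * (m.choose i : ℂ) * (N.choose i : ℂ) * (j.factorial : ℂ) *
            (n.choose j : ℂ) * (M.choose j : ℂ) * (ρ:ℂ)^(i+j) *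
            complexHermite (m + M - i - j) (n + N - i - j) z ρ := by
  induction n with
  | zero =>
    intro m M N
    rw [J_m0, Zlem]
    refine Finset.sum_congr rfl fun i _ => ?_
    rw [Finset.sum_range_one]
    simp
  | succ n ih =>
    intro m M N
    have L1 : complexHermite m (n+1) z ρ * complexHermite M N z ρ
        = (starRingEnd ℂ z) * (complexHermite m n z ρ * complexHermite M N z ρ)
          - (ρ:ℂ) * m * (complexHermite (m-1) n z ρ * complexHermite M N z ρ) := by
      rw [recB]; ring
    rw [L1, ih m M N, ih (m-1) M N]
    -- push conj z inside the first double sum and split into S1 + S2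
    have hw : (starRingEnd ℂ z) * ∑ i ∈ Finset.range (m+1), ∑ j ∈ Finset.range (n+1),
          (i.factorial : ℂ) * (m.choose i : ℂ) * (N.choose i : ℂ) * (j.factorial : ℂ) *
            (n.choose j : ℂ) * (M.choose j : ℂ) * (ρ:ℂ)^(i+j) *
            complexHermite (m + M - i - j) (n + N - i - j) z ρ
        = (∑ i ∈ Finset.range (m+1), ∑ j ∈ Finset.range (n+1),
            (i.factorial : ℂ) * (m.choose i : ℂ) * (N.choose i : ℂ) * (j.factorial : ℂ) *
              (n.choose j : ℂ) * (M.choose j : ℂ) * (ρ:ℂ)^(i+j) *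
              complexHermite (m + M - i - j) ((n + N - i - j) + 1) z ρ)
          + ∑ i ∈ Finset.range (m+1), ∑ j ∈ Finset.range (n+1),
            (i.factorial : ℂ) * (m.choose i : ℂ) * (N.choose i : ℂ) * (j.factorial : ℂ) *
              (n.choose j : ℂ) * (M.choose j : ℂ) * (ρ:ℂ)^(i+j) *
              ((ρ:ℂ) * ((m + M - i - j : ℕ) : ℂ) *
                complexHermite (m + M - i - j - 1) (n + N - i - j) z ρ) := by
      rw [Finset.mul_sum, ← Finset.sum_add_distrib]
      refine Finset.sum_congr rfl fun i _ => ?_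
      rw [Finset.mul_sum, ← Finset.sum_add_distrib]
      refine Finset.sum_congr rfl fun j _ => ?_
      calc (starRingEnd ℂ z) * ((i.factorial : ℂ) * (m.choose i : ℂ) * (N.choose i : ℂ) *
            (j.factorial : ℂ) * (n.choose j : ℂ) * (M.choose j : ℂ) * (ρ:ℂ)^(i+j) *
            complexHermite (m + M - i - j) (n + N - i - j) z ρ)
          = (i.factorial : ℂ) * (m.choose i : ℂ) * (N.choose i : ℂ) *
            (j.factorial : ℂ) * (n.choose j : ℂ) * (M.choose j : ℂ) * (ρ:ℂ)^(i+j) *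
            ((starRingEnd ℂ z) * complexHermite (m + M - i - j) (n + N - i - j) z ρ) := by ring
        _ = _ := by rw [absB]; ring
    rw [hw]
    -- extend the subtracted sum's range from m-1+1 to m+1 and push the factor inside
    have hS3 : (ρ:ℂ) * m * ∑ i ∈ Finset.range (m-1+1), ∑ j ∈ Finset.range (n+1),
          (i.factorial : ℂ) * ((m-1).choose i : ℂ) * (N.choose i : ℂ) * (j.factorial : ℂ) *
            (n.choose j : ℂ) * (M.choose j : ℂ) * (ρ:ℂ)^(i+j) *
            complexHermite (m - 1 + M - i - j) (n + N - i - j) z ρ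
        = ∑ i ∈ Finset.range (m+1), ∑ j ∈ Finset.range (n+1),
            (ρ:ℂ) * m * ((i.factorial : ℂ) * ((m-1).choose i : ℂ) * (N.choose i : ℂ) *
              (j.factorial : ℂ) * (n.choose j : ℂ) * (M.choose j : ℂ) * (ρ:ℂ)^(i+j) *
              complexHermite (m - 1 + M - i - j) (n + N - i - j) z ρ) := by
      rcases m with _ | k
      · simp
      · simp only [Nat.add_sub_cancel]
        rw [Finset.sum_range_succ (fun i => ∑ j ∈ Finset.range (n+1),
          (ρ:ℂ) * ((k+1 : ℕ) : ℂ) * ((i.factorial : ℂ) * (k.choose i : ℂ) * (N.choose i : ℂ) *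
            (j.factorial : ℂ) * (n.choose j : ℂ) * (M.choose j : ℂ) * (ρ:ℂ)^(i+j) *
            complexHermite (k + M - i - j) (n + N - i - j) z ρ)) (k+1)]
        have hzero : ∑ j ∈ Finset.range (n+1),
            (ρ:ℂ) * ((k+1 : ℕ) : ℂ) * (((k+1).factorial : ℂ) * (k.choose (k+1) : ℂ) *
              (N.choose (k+1) : ℂ) * (j.factorial : ℂ) * (n.choose j : ℂ) * (M.choose j : ℂ) *
              (ρ:ℂ)^((k+1)+j) * complexHermite (k + M - (k+1) - j) (n + N - (k+1) - j) z ρ)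
            = 0 := by
          simp [Nat.choose_succ_self]
        rw [hzero, add_zero, Finset.mul_sum]
        refine Finset.sum_congr rfl fun i _ => ?_
        rw [Finset.mul_sum]
    rw [hS3]
    -- S1 = Pa
    have hS1 : (∑ i ∈ Finset.range (m+1), ∑ j ∈ Finset.range (n+1),
          (i.factorial : ℂ) * (m.choose i : ℂ) * (N.choose i : ℂ) * (j.factorial : ℂ) *
            (n.choose j : ℂ) * (M.choose j : ℂ) * (ρ:ℂ)^(i+j) *
            complexHermite (m + M - i - j) ((n + N - i - j) + 1) z ρ)
        = ∑ i ∈ Finset.range (m+1), ∑ j ∈ Finset.range (n+1),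
          (i.factorial : ℂ) * (m.choose i : ℂ) * (N.choose i : ℂ) * (j.factorial : ℂ) *
            (n.choose j : ℂ) * (M.choose j : ℂ) * (ρ:ℂ)^(i+j) *
            complexHermite (m + M - i - j) (n + 1 + N - i - j) z ρ := by
      refine Finset.sum_congr rfl fun i _ => ?_
      refine Finset.sum_congr rfl fun j hj => ?_
      simp only [Finset.mem_range] at hj
      by_cases hi : i ≤ N
      · rw [show (n + N - i - j) + 1 = n + 1 + N - i - j by omega]
      · have hc : N.choose i = 0 := Nat.choose_eq_zero_of_lt (by omega)
        simp [hc]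
    -- S2 = Pb + S3sum (termwise)
    have hS2 : (∑ i ∈ Finset.range (m+1), ∑ j ∈ Finset.range (n+1),
          (i.factorial : ℂ) * (m.choose i : ℂ) * (N.choose i : ℂ) * (j.factorial : ℂ) *
            (n.choose j : ℂ) * (M.choose j : ℂ) * (ρ:ℂ)^(i+j) *
            ((ρ:ℂ) * ((m + M - i - j : ℕ) : ℂ) *
              complexHermite (m + M - i - j - 1) (n + N - i - j) z ρ))
        = (∑ i ∈ Finset.range (m+1), ∑ j ∈ Finset.range (n+1),
            (i.factorial : ℂ) * (m.choose i : ℂ) * (N.choose i : ℂ) * ((j+1).factorial : ℂ) *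
              (n.choose j : ℂ) * (M.choose (j+1) : ℂ) * (ρ:ℂ)^(i+(j+1)) *
              complexHermite (m + M - i - j - 1) (n + N - i - j) z ρ)
          + ∑ i ∈ Finset.range (m+1), ∑ j ∈ Finset.range (n+1),
            (ρ:ℂ) * m * ((i.factorial : ℂ) * ((m-1).choose i : ℂ) * (N.choose i : ℂ) *
              (j.factorial : ℂ) * (n.choose j : ℂ) * (M.choose j : ℂ) * (ρ:ℂ)^(i+j) *
              complexHermite (m - 1 + M - i - j) (n + N - i - j) z ρ) := by
      rw [← Finset.sum_add_distrib]
      refine Finset.sum_congr rfl fun i _ => ?_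
      rw [← Finset.sum_add_distrib]
      refine Finset.sum_congr rfl fun j _ => ?_
      have keyC := congrArg (Nat.cast : ℕ → ℂ) (keyL m M i j)
      by_cases hm : m = 0
      · subst hm
        push_cast [Nat.factorial_succ] at keyC ⊢
        linear_combination ((i.factorial : ℂ) * (N.choose i : ℂ) * (j.factorial : ℂ) *
          (n.choose j : ℂ) * (ρ:ℂ)^(i+j) * (ρ:ℂ) *
          complexHermite (0 + M - i - j - 1) (n + N - i - j) z ρ) * keyC
      · rw [show m - 1 + M - i - j = m + M - i - j - 1 by omega]
        push_cast [Nat.factorial_succ] at keyC ⊢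
        linear_combination ((i.factorial : ℂ) * (N.choose i : ℂ) * (j.factorial : ℂ) *
          (n.choose j : ℂ) * (ρ:ℂ)^(i+j) * (ρ:ℂ) *
          complexHermite (m + M - i - j - 1) (n + N - i - j) z ρ) * keyC
    -- RHS = Pa + Pb
    have hRHS : (∑ i ∈ Finset.range (m+1), ∑ j ∈ Finset.range (n+1+1),
          (i.factorial : ℂ) * (m.choose i : ℂ) * (N.choose i : ℂ) * (j.factorial : ℂ) *
            ((n+1).choose j : ℂ) * (M.choose j : ℂ) * (ρ:ℂ)^(i+j) *
            complexHermite (m + M - i - j) (n + 1 + N - i - j) z ρ)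
        = (∑ i ∈ Finset.range (m+1), ∑ j ∈ Finset.range (n+1),
            (i.factorial : ℂ) * (m.choose i : ℂ) * (N.choose i : ℂ) * (j.factorial : ℂ) *
              (n.choose j : ℂ) * (M.choose j : ℂ) * (ρ:ℂ)^(i+j) *
              complexHermite (m + M - i - j) (n + 1 + N - i - j) z ρ)
          + ∑ i ∈ Finset.range (m+1), ∑ j ∈ Finset.range (n+1),
            (i.factorial : ℂ) * (m.choose i : ℂ) * (N.choose i : ℂ) * ((j+1).factorial : ℂ) *
              (n.choose j : ℂ) * (M.choose (j+1) : ℂ) * (ρ:ℂ)^(i+(j+1)) *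
              complexHermite (m + M - i - j - 1) (n + N - i - j) z ρ := by
      rw [← Finset.sum_add_distrib]
      refine Finset.sum_congr rfl fun i _ => ?_
      rw [Finset.sum_range_succ' (fun j => (i.factorial : ℂ) * (m.choose i : ℂ) *
        (N.choose i : ℂ) * (j.factorial : ℂ) * ((n+1).choose j : ℂ) * (M.choose j : ℂ) *
        (ρ:ℂ)^(i+j) * complexHermite (m + M - i - j) (n + 1 + N - i - j) z ρ) (n+1)]
      have hsplit : ∀ j ∈ Finset.range (n+1),
          (i.factorial : ℂ) * (m.choose i : ℂ) * (N.choose i : ℂ) * ((j+1).factorial : ℂ) *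
            ((n+1).choose (j+1) : ℂ) * (M.choose (j+1) : ℂ) * (ρ:ℂ)^(i+(j+1)) *
            complexHermite (m + M - i - (j+1)) (n + 1 + N - i - (j+1)) z ρ
          = (i.factorial : ℂ) * (m.choose i : ℂ) * (N.choose i : ℂ) * ((j+1).factorial : ℂ) *
              (n.choose (j+1) : ℂ) * (M.choose (j+1) : ℂ) * (ρ:ℂ)^(i+(j+1)) *
              complexHermite (m + M - i - (j+1)) (n + 1 + N - i - (j+1)) z ρ
            + (i.factorial : ℂ) * (m.choose i : ℂ) * (N.choose i : ℂ) * ((j+1).factorial : ℂ) *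
              (n.choose j : ℂ) * (M.choose (j+1) : ℂ) * (ρ:ℂ)^(i+(j+1)) *
              complexHermite (m + M - i - j - 1) (n + N - i - j) z ρ := by
        intro j _
        have hP : (((n+1).choose (j+1) : ℕ) : ℂ) = (n.choose j : ℂ) + (n.choose (j+1) : ℂ) := by
          exact_mod_cast congrArg (Nat.cast : ℕ → ℂ) (Nat.choose_succ_succ n j)
        rw [show m + M - i - (j+1) = m + M - i - j - 1 by omega,
          show n + 1 + N - i - (j+1) = n + N - i - j by omega, hP]
        ring
      rw [Finset.sum_congr rfl hsplit, Finset.sum_add_distrib]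
      have h0 : (i.factorial : ℂ) * (m.choose i : ℂ) * (N.choose i : ℂ) *
            ((0:ℕ).factorial : ℂ) * ((n+1).choose 0 : ℂ) * (M.choose 0 : ℂ) * (ρ:ℂ)^(i+0) *
            complexHermite (m + M - i - 0) (n + 1 + N - i - 0) z ρ
          = (i.factorial : ℂ) * (m.choose i : ℂ) * (N.choose i : ℂ) *
            ((0:ℕ).factorial : ℂ) * (n.choose 0 : ℂ) * (M.choose 0 : ℂ) * (ρ:ℂ)^(i+0) *
            complexHermite (m + M - i - 0) (n + 1 + N - i - 0) z ρ := by
        norm_num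
      rw [h0]
      have hA : (∑ x ∈ Finset.range (n+1), (i.factorial : ℂ) * (m.choose i : ℂ) *
            (N.choose i : ℂ) * ((x+1).factorial : ℂ) * (n.choose (x+1) : ℂ) *
            (M.choose (x+1) : ℂ) * (ρ:ℂ)^(i+(x+1)) *
            complexHermite (m + M - i - (x+1)) (n + 1 + N - i - (x+1)) z ρ)
          + (i.factorial : ℂ) * (m.choose i : ℂ) * (N.choose i : ℂ) *
            ((0:ℕ).factorial : ℂ) * (n.choose 0 : ℂ) * (M.choose 0 : ℂ) * (ρ:ℂ)^(i+0) *
            complexHermite (m + M - i - 0) (n + 1 + N - i - 0) z ρ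
          = ∑ j ∈ Finset.range (n+1+1), (i.factorial : ℂ) * (m.choose i : ℂ) *
            (N.choose i : ℂ) * (j.factorial : ℂ) * (n.choose j : ℂ) * (M.choose j : ℂ) *
            (ρ:ℂ)^(i+j) * complexHermite (m + M - i - j) (n + 1 + N - i - j) z ρ :=
        (Finset.sum_range_succ' (fun j => (i.factorial : ℂ) * (m.choose i : ℂ) *
          (N.choose i : ℂ) * (j.factorial : ℂ) * (n.choose j : ℂ) * (M.choose j : ℂ) *
          (ρ:ℂ)^(i+j) * complexHermite (m + M - i - j) (n + 1 + N - i - j) z ρ) (n+1)).symm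
      have hB : (∑ j ∈ Finset.range (n+1+1), (i.factorial : ℂ) * (m.choose i : ℂ) *
            (N.choose i : ℂ) * (j.factorial : ℂ) * (n.choose j : ℂ) * (M.choose j : ℂ) *
            (ρ:ℂ)^(i+j) * complexHermite (m + M - i - j) (n + 1 + N - i - j) z ρ)
          = ∑ j ∈ Finset.range (n+1), (i.factorial : ℂ) * (m.choose i : ℂ) *
            (N.choose i : ℂ) * (j.factorial : ℂ) * (n.choose j : ℂ) * (M.choose j : ℂ) *
            (ρ:ℂ)^(i+j) * complexHermite (m + M - i - j) (n + 1 + N - i - j) z ρ := by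
        rw [Finset.sum_range_succ (fun j => (i.factorial : ℂ) * (m.choose i : ℂ) *
          (N.choose i : ℂ) * (j.factorial : ℂ) * (n.choose j : ℂ) * (M.choose j : ℂ) *
          (ρ:ℂ)^(i+j) * complexHermite (m + M - i - j) (n + 1 + N - i - j) z ρ) (n+1)]
        simp [Nat.choose_succ_self]
      rw [hB] at hA
      linear_combination hA
    rw [hS2, hRHS, hS1]
    ring

end CHAux

/-- Squared-modulus expansion of complex Hermite polynomials:
`|J_{m,n}(z,ρ)|² = Σ_{i≤m} Σ_{j≤n} C(m,i)²C(n,j)² i!j! ρ^{i+j} J_{m+n−i−j,m+n−i−j}(z,ρ)`,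
and `conj(J_{m,n}(z,ρ)) = J_{n,m}(z,ρ)`. -/
theorem complexHermite_sq_modulus (m n : ℕ) (z : ℂ) (ρ : ℝ) :
    complexHermite m n z ρ * (starRingEnd ℂ) (complexHermite m n z ρ)
      = (∑ i ∈ Finset.range (m + 1), ∑ j ∈ Finset.range (n + 1),
          (Nat.choose m i : ℂ) ^ 2 * (Nat.choose n j : ℂ) ^ 2 *
            (Nat.factorial i : ℂ) * (Nat.factorial j : ℂ) * (ρ : ℂ) ^ (i + j) *
            complexHermite (m + n - i - j) (m + n - i - j) z ρ) ∧
    (starRingEnd ℂ) (complexHermite m n z ρ) = complexHermite n m z ρ := by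
  refine ⟨?_, CHAux.conj_J z ρ m n⟩
  rw [CHAux.conj_J z ρ m n, CHAux.prod_formula z ρ n m n m]
  refine Finset.sum_congr rfl fun i _ => ?_
  refine Finset.sum_congr rfl fun j _ => ?_
  rw [show n + m - i - j = m + n - i - j by omega]
  ring
end
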